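/- arXiv:2308.14183 — 4 statements merged into one kernel-verified Lean document; each statement's English description precedes it below -/
import Mathlib

section
/- For all integers k₁, k₂ ≥ 0, the number of walks of length 2(k₁+k₂) on Young's lattice starting and ending at the empty partition, in which each odd step removes zero or one box and each even step adds zero or one box, equals the Bell number B(k₁+k₂). -/
open Finset

def stirling : ℕ → ℕ → ℕ
  | 0, 0 => 1
  | 0, _ + 1 => 0
  | _ + 1, 0 => 0
  | n + 1, j + 1 => (j + 1) * stirling n (j + 1) + stirling n j

/-- The `n`-th Bell number, as the total number of set partitions. -/
def bell (n : ℕ) : ℕ := ∑ r ∈ Finset.range (n + 1), stirling n r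

namespace SVT
open YoungDiagram


def Addable (μ : YoungDiagram) (i : ℕ) : Prop := i = 0 ∨ μ.rowLen i < μ.rowLen (i-1)

instance (μ : YoungDiagram) (i : ℕ) : Decidable (Addable μ i) := by unfold Addable; infer_instance

def Removable (μ : YoungDiagram) (i : ℕ) : Prop := μ.rowLen (i+1) < μ.rowLen i

instance (μ : YoungDiagram) (i : ℕ) : Decidable (Removable μ i) := by unfold Removable; infer_instance

lemma addable_lt {μ : YoungDiagram} {i : ℕ} (h : Addable μ i) {i' : ℕ} (hi : i' < i) :
    μ.rowLen i < μ.rowLen i' := by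
  rcases h with h | h
  · omega
  · exact lt_of_lt_of_le h (μ.rowLen_anti i' (i-1) (by omega))

def addCell (μ : YoungDiagram) (i : ℕ) : YoungDiagram :=
  if h : Addable μ i then
    ⟨insert (i, μ.rowLen i) μ.cells, by
      intro c d hcd hd
      simp only [Finset.coe_insert, Set.mem_insert_iff, Finset.mem_coe, mem_cells] at hd ⊢
      obtain ⟨c1, c2⟩ := c; obtain ⟨d1, d2⟩ := d
      obtain ⟨h1, h2⟩ := Prod.mk_le_mk.mp hcd
      rcases hd with hd | hd
      · obtain ⟨hd1, hd2⟩ := Prod.mk.injEq .. ▸ hd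
        subst hd1; subst hd2
        rcases lt_or_eq_of_le h1 with hc1 | rfl
        · right
          exact mem_iff_lt_rowLen.mpr (lt_of_le_of_lt h2 (addable_lt h hc1))
        · rcases lt_or_eq_of_le h2 with hc2 | rfl
          · right; exact mem_iff_lt_rowLen.mpr hc2
          · left; rfl
      · right; exact μ.up_left_mem h1 h2 hd⟩
  else μ

lemma addCell_cells {μ : YoungDiagram} {i : ℕ} (h : Addable μ i) :
    (addCell μ i).cells = insert (i, μ.rowLen i) μ.cells := by
  rw [addCell, dif_pos h]

lemma corner_notMem (μ : YoungDiagram) (i : ℕ) : (i, μ.rowLen i) ∉ μ := by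
  simp [mem_iff_lt_rowLen]

lemma le_addCell (μ : YoungDiagram) (i : ℕ) : μ ≤ addCell μ i := by
  by_cases h : Addable μ i
  · intro c hc
    show c ∈ (addCell μ i).cells
    rw [addCell_cells h]
    exact Finset.mem_insert_of_mem hc
  · rw [addCell, dif_neg h]

lemma card_addCell {μ : YoungDiagram} {i : ℕ} (h : Addable μ i) :
    (addCell μ i).card = μ.card + 1 := by
  show (addCell μ i).cells.card = _
  rw [addCell_cells h, Finset.card_insert_of_notMem (by exact_mod_cast corner_notMem μ i)]

lemma mem_addCell {μ : YoungDiagram} {i : ℕ} (h : Addable μ i) {c : ℕ × ℕ} :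
    c ∈ addCell μ i ↔ c = (i, μ.rowLen i) ∨ c ∈ μ := by
  show c ∈ (addCell μ i).cells ↔ _
  rw [addCell_cells h]; simp

/-- helper to compute rowLen -/
lemma rowLen_eq {μ : YoungDiagram} {i t : ℕ} (h1 : (i, t) ∉ μ) (h2 : ∀ j < t, (i, j) ∈ μ) :
    μ.rowLen i = t := by
  have ha : μ.rowLen i ≤ t := by
    by_contra hc
    exact h1 (mem_iff_lt_rowLen.mpr (by omega))
  rcases Nat.eq_zero_or_pos t with rfl | ht
  · omega
  · have := mem_iff_lt_rowLen.mp (h2 (t-1) (by omega))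
    omega

lemma rowLen_addCell_self {μ : YoungDiagram} {i : ℕ} (h : Addable μ i) :
    (addCell μ i).rowLen i = μ.rowLen i + 1 := by
  apply rowLen_eq
  · rw [mem_addCell h]
    push_neg
    constructor
    · simp
    · exact fun hc => (corner_notMem μ i) (by
        have := mem_iff_lt_rowLen.mp hc; exact mem_iff_lt_rowLen.mpr (by omega))
  · intro j hj
    rw [mem_addCell h]
    rcases Nat.lt_or_ge j (μ.rowLen i) with hj' | hj'
    · right; exact mem_iff_lt_rowLen.mpr hj'
    · left; have : j = μ.rowLen i := by omega
      rw [this]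

lemma rowLen_addCell_ne {μ : YoungDiagram} {i : ℕ} (h : Addable μ i) {i' : ℕ} (hne : i' ≠ i) :
    (addCell μ i).rowLen i' = μ.rowLen i' := by
  apply rowLen_eq
  · rw [mem_addCell h]
    push_neg
    exact ⟨by simp [hne], corner_notMem μ i'⟩
  · intro j hj
    rw [mem_addCell h]
    right; exact mem_iff_lt_rowLen.mpr hj




lemma removable_pos {μ : YoungDiagram} {i : ℕ} (h : Removable μ i) : 0 < μ.rowLen i := by
  unfold Removable at h; omega

def delCell (μ : YoungDiagram) (i : ℕ) : YoungDiagram :=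
  if h : Removable μ i then
    ⟨μ.cells.erase (i, μ.rowLen i - 1), by
      intro x y hyx hx
      simp only [Finset.coe_erase, Set.mem_diff, Finset.mem_coe, mem_cells,
        Set.mem_singleton_iff] at hx ⊢
      obtain ⟨hx, hxne⟩ := hx
      obtain ⟨x1, x2⟩ := x; obtain ⟨y1, y2⟩ := y
      obtain ⟨h1, h2⟩ := Prod.mk_le_mk.mp hyx
      refine ⟨μ.up_left_mem h1 h2 hx, ?_⟩
      intro hc
      obtain ⟨hc1, hc2⟩ := Prod.mk.injEq .. ▸ hc
      subst hc1; subst hc2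
      -- y = (i, rowLen i - 1) = corner, x ≥ y, x ∈ μ, x ≠ corner : contradiction
      have hpos := removable_pos h
      have hxmem := mem_iff_lt_rowLen.mp hx
      apply hxne
      have hx1 : x1 = y1 := by
        by_contra hne
        have : y1 + 1 ≤ x1 := by omega
        have := μ.rowLen_anti (y1+1) x1 this
        unfold Removable at h
        omega
      subst hx1
      simp only [Prod.mk.injEq, true_and]
      omega⟩
  else μ

lemma delCell_cells {μ : YoungDiagram} {i : ℕ} (h : Removable μ i) :
    (delCell μ i).cells = μ.cells.erase (i, μ.rowLen i - 1) := by
  rw [delCell, dif_pos h]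

lemma corner_mem {μ : YoungDiagram} {i : ℕ} (h : Removable μ i) : (i, μ.rowLen i - 1) ∈ μ := by
  have := removable_pos h
  exact mem_iff_lt_rowLen.mpr (by omega)

lemma delCell_le (μ : YoungDiagram) (i : ℕ) : delCell μ i ≤ μ := by
  by_cases h : Removable μ i
  · intro c hc
    show c ∈ μ.cells
    have : c ∈ (delCell μ i).cells := hc
    rw [delCell_cells h] at this
    exact Finset.mem_of_mem_erase this
  · rw [delCell, dif_neg h]

lemma card_delCell {μ : YoungDiagram} {i : ℕ} (h : Removable μ i) :
    μ.card = (delCell μ i).card + 1 := by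
  show μ.cells.card = (delCell μ i).cells.card + 1
  rw [delCell_cells h, Finset.card_erase_of_mem (by exact_mod_cast corner_mem h)]
  have : 0 < μ.cells.card := Finset.card_pos.mpr ⟨_, (by exact_mod_cast corner_mem h : (i, μ.rowLen i - 1) ∈ μ.cells)⟩
  omega

lemma mem_delCell {μ : YoungDiagram} {i : ℕ} (h : Removable μ i) {c : ℕ × ℕ} :
    c ∈ delCell μ i ↔ c ∈ μ ∧ c ≠ (i, μ.rowLen i - 1) := by
  show c ∈ (delCell μ i).cells ↔ _
  rw [delCell_cells h]
  simp [Finset.mem_erase, and_comm]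

lemma rowLen_eq' {μ : YoungDiagram} {i t : ℕ} (h1 : (i, t) ∉ μ) (h2 : ∀ j < t, (i, j) ∈ μ) :
    μ.rowLen i = t := by
  have ha : μ.rowLen i ≤ t := by
    by_contra hc
    exact h1 (mem_iff_lt_rowLen.mpr (by omega))
  rcases Nat.eq_zero_or_pos t with rfl | ht
  · omega
  · have := mem_iff_lt_rowLen.mp (h2 (t-1) (by omega))
    omega

lemma rowLen_delCell_self {μ : YoungDiagram} {i : ℕ} (h : Removable μ i) :
    (delCell μ i).rowLen i = μ.rowLen i - 1 := by
  have hpos := removable_pos h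
  apply rowLen_eq'
  · rw [mem_delCell h]; simp
  · intro j hj
    rw [mem_delCell h]
    refine ⟨mem_iff_lt_rowLen.mpr (by omega), by simp; omega⟩

lemma rowLen_delCell_ne {μ : YoungDiagram} {i : ℕ} (h : Removable μ i) {i' : ℕ} (hne : i' ≠ i) :
    (delCell μ i).rowLen i' = μ.rowLen i' := by
  apply rowLen_eq'
  · rw [mem_delCell h]
    push_neg
    intro hc
    exact absurd hc (by simp [mem_iff_lt_rowLen])
  · intro j hj
    rw [mem_delCell h]
    exact ⟨mem_iff_lt_rowLen.mpr hj, by simp [hne]⟩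

lemma eq_of_le_of_card_le {μ ν : YoungDiagram} (h : μ ≤ ν) (hc : ν.card ≤ μ.card) : μ = ν := by
  ext c
  have := Finset.eq_of_subset_of_card_le (cells_subset_iff.mpr h) hc
  rw [this]

lemma exists_addCell_of_covers {μ ν : YoungDiagram} (h : μ ≤ ν) (hc : ν.card = μ.card + 1) :
    ∃ i, Addable μ i ∧ ν = addCell μ i := by
  have hss : μ.cells ⊆ ν.cells := cells_subset_iff.mpr h
  have hc' : ν.cells.card = μ.cells.card + 1 := hc
  have hcard : (ν.cells \ μ.cells).card = 1 := by
    rw [Finset.card_sdiff_of_subset hss]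
    have := Finset.card_le_card hss
    omega
  obtain ⟨c, hc1⟩ := Finset.card_eq_one.mp hcard
  obtain ⟨i, j⟩ := c
  have hmemν : (i, j) ∈ ν := by
    have : (i,j) ∈ ν.cells \ μ.cells := hc1 ▸ Finset.mem_singleton_self _
    exact (Finset.mem_sdiff.mp this).1
  have hmemμ : (i, j) ∉ μ := by
    have : (i,j) ∈ ν.cells \ μ.cells := hc1 ▸ Finset.mem_singleton_self _
    exact fun hcon => (Finset.mem_sdiff.mp this).2 hcon
  have hother : ∀ c' : ℕ × ℕ, c' ∈ ν → c' ≠ (i, j) → c' ∈ μ := by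
    intro c' hc' hne
    by_contra hcon
    have : c' ∈ ν.cells \ μ.cells := Finset.mem_sdiff.mpr ⟨hc', hcon⟩
    rw [hc1] at this
    exact hne (Finset.mem_singleton.mp this)
  have hrl : μ.rowLen i = j := by
    apply rowLen_eq hmemμ
    intro j' hj'
    exact hother (i, j') (ν.up_left_mem le_rfl (by omega) hmemν) (by simp; omega)
  have hadd : Addable μ i := by
    rcases Nat.eq_zero_or_pos i with rfl | hi
    · left; rfl
    · right
      have : (i-1, j) ∈ μ := hother _ (ν.up_left_mem (by omega) le_rfl hmemν) (by simp; omega)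
      have := mem_iff_lt_rowLen.mp this
      omega
  refine ⟨i, hadd, ?_⟩
  ext c
  show c ∈ ν.cells ↔ c ∈ (addCell μ i).cells
  rw [addCell_cells hadd, hrl]
  constructor
  · intro hcν
    rcases eq_or_ne c (i, j) with rfl | hne
    · exact Finset.mem_insert_self _ _
    · exact Finset.mem_insert_of_mem (hother c hcν hne)
  · intro hcm
    rcases Finset.mem_insert.mp hcm with rfl | hcm
    · exact hmemν
    · exact hss hcm

lemma exists_delCell_of_covers {κ μ : YoungDiagram} (h : κ ≤ μ) (hc : μ.card = κ.card + 1) :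
    ∃ i, Removable μ i ∧ κ = delCell μ i := by
  have hss : κ.cells ⊆ μ.cells := cells_subset_iff.mpr h
  have hc' : μ.cells.card = κ.cells.card + 1 := hc
  have hcard : (μ.cells \ κ.cells).card = 1 := by
    rw [Finset.card_sdiff_of_subset hss]
    have := Finset.card_le_card hss
    omega
  obtain ⟨c, hc1⟩ := Finset.card_eq_one.mp hcard
  obtain ⟨i, j⟩ := c
  have hmemμ : (i, j) ∈ μ := by
    have : (i,j) ∈ μ.cells \ κ.cells := hc1 ▸ Finset.mem_singleton_self _
    exact (Finset.mem_sdiff.mp this).1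
  have hmemκ : (i, j) ∉ κ := by
    have : (i,j) ∈ μ.cells \ κ.cells := hc1 ▸ Finset.mem_singleton_self _
    exact fun hcon => (Finset.mem_sdiff.mp this).2 hcon
  have hother : ∀ c' : ℕ × ℕ, c' ∈ μ → c' ≠ (i, j) → c' ∈ κ := by
    intro c' hc' hne
    by_contra hcon
    have : c' ∈ μ.cells \ κ.cells := Finset.mem_sdiff.mpr ⟨hc', hcon⟩
    rw [hc1] at this
    exact hne (Finset.mem_singleton.mp this)
  have hrl : μ.rowLen i = j + 1 := by
    apply rowLen_eq
    · intro hcon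
      have : (i, j+1) ∈ κ := hother _ hcon (by simp)
      exact hmemκ (κ.up_left_mem le_rfl (by omega) this)
    · intro j' hj'
      exact μ.up_left_mem le_rfl (by omega) hmemμ
  have hrem : Removable μ i := by
    unfold Removable
    rw [hrl]
    by_contra hcon
    have : (i+1, j) ∈ μ := mem_iff_lt_rowLen.mpr (by omega)
    have : (i+1, j) ∈ κ := hother _ this (by simp)
    exact hmemκ (κ.up_left_mem (by omega) le_rfl this)
  refine ⟨i, hrem, ?_⟩
  ext c
  show c ∈ κ.cells ↔ c ∈ (delCell μ i).cells
  rw [delCell_cells hrem, hrl]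
  simp only [Nat.add_sub_cancel, Finset.mem_erase]
  constructor
  · intro hcκ
    exact ⟨fun hcon => hmemκ (hcon ▸ hcκ), hss hcκ⟩
  · rintro ⟨hne, hcm⟩
    exact hother c hcm hne


instance : DecidableEq YoungDiagram :=
  fun μ ν => decidable_of_iff (μ.cells = ν.cells) ⟨fun h => YoungDiagram.ext (by rw [h]), fun h => by rw [h]⟩

def addableRows (μ : YoungDiagram) : Finset ℕ :=
  (Finset.range (μ.colLen 0 + 1)).filter (fun i => Addable μ i)

def removableRows (μ : YoungDiagram) : Finset ℕ :=
  (Finset.range (μ.colLen 0)).filter (fun i => Removable μ i)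

lemma mem_addableRows {μ : YoungDiagram} {i : ℕ} : i ∈ addableRows μ ↔ Addable μ i := by
  unfold addableRows
  simp only [Finset.mem_filter, Finset.mem_range, and_iff_right_iff_imp]
  intro h
  rcases h with rfl | h
  · omega
  · have : (i-1, 0) ∈ μ := mem_iff_lt_rowLen.mpr (by omega)
    have := mem_iff_lt_colLen.mp this
    omega

lemma mem_removableRows {μ : YoungDiagram} {i : ℕ} : i ∈ removableRows μ ↔ Removable μ i := by
  unfold removableRows
  simp only [Finset.mem_filter, Finset.mem_range, and_iff_right_iff_imp]
  intro h
  have : (i, 0) ∈ μ := mem_iff_lt_rowLen.mpr (removable_pos h)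
  exact mem_iff_lt_colLen.mp this

lemma card_addableRows (μ : YoungDiagram) :
    (addableRows μ).card = (removableRows μ).card + 1 := by
  have heq : addableRows μ = insert 0 ((removableRows μ).image (· + 1)) := by
    ext i
    rw [mem_addableRows]
    simp only [Finset.mem_insert, Finset.mem_image]
    constructor
    · intro h
      rcases Nat.eq_zero_or_pos i with rfl | hi
      · left; rfl
      · right
        refine ⟨i - 1, mem_removableRows.mpr ?_, by omega⟩
        unfold Removable
        have heq : i - 1 + 1 = i := by omega
        rw [heq]
        exact addable_lt h (by omega)
    · intro h
      rcases h with rfl | ⟨j, hj, rfl⟩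
      · left; rfl
      · have := mem_removableRows.mp hj
        unfold Removable at this
        right; simpa using this
  rw [heq, Finset.card_insert_of_notMem (by simp), Finset.card_image_of_injective _
    (fun a b h => by omega)]

def upCovers (μ : YoungDiagram) : Finset YoungDiagram := (addableRows μ).image (addCell μ)
def downCovers (μ : YoungDiagram) : Finset YoungDiagram := (removableRows μ).image (delCell μ)

lemma mem_upCovers {μ ν : YoungDiagram} : ν ∈ upCovers μ ↔ μ ≤ ν ∧ ν.card = μ.card + 1 := by
  unfold upCovers
  simp only [Finset.mem_image]
  constructor
  · rintro ⟨i, hi, rfl⟩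
    exact ⟨le_addCell μ i, card_addCell (mem_addableRows.mp hi)⟩
  · rintro ⟨h1, h2⟩
    obtain ⟨i, hadd, rfl⟩ := exists_addCell_of_covers h1 h2
    exact ⟨i, mem_addableRows.mpr hadd, rfl⟩

lemma mem_downCovers {μ κ : YoungDiagram} : κ ∈ downCovers μ ↔ κ ≤ μ ∧ μ.card = κ.card + 1 := by
  unfold downCovers
  simp only [Finset.mem_image]
  constructor
  · rintro ⟨i, hi, rfl⟩
    exact ⟨delCell_le μ i, card_delCell (mem_removableRows.mp hi)⟩
  · rintro ⟨h1, h2⟩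
    obtain ⟨i, hrem, rfl⟩ := exists_delCell_of_covers h1 h2
    exact ⟨i, mem_removableRows.mpr hrem, rfl⟩

lemma card_upCovers (μ : YoungDiagram) :
    (upCovers μ).card = (downCovers μ).card + 1 := by
  unfold upCovers downCovers
  rw [Finset.card_image_of_injOn, Finset.card_image_of_injOn, card_addableRows]
  · intro a ha b hb hab
    by_contra hne
    have ha' := mem_removableRows.mp ha
    have hb' := mem_removableRows.mp hb
    have h1 : (delCell μ a).rowLen a = μ.rowLen a - 1 := rowLen_delCell_self ha'
    have h2 : (delCell μ b).rowLen a = μ.rowLen a := rowLen_delCell_ne hb' hne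
    have := removable_pos ha'
    rw [hab] at h1
    omega
  · intro a ha b hb hab
    by_contra hne
    have ha' := mem_addableRows.mp ha
    have hb' := mem_addableRows.mp hb
    have h1 : (addCell μ a).rowLen a = μ.rowLen a + 1 := rowLen_addCell_self ha'
    have h2 : (addCell μ b).rowLen a = μ.rowLen a := rowLen_addCell_ne hb' hne
    rw [hab] at h1
    omega

lemma card_le_of_le {μ ν : YoungDiagram} (h : μ ≤ ν) : μ.card ≤ ν.card :=
  Finset.card_le_card (cells_subset_iff.mpr h)

def upSet (μ : YoungDiagram) : Finset YoungDiagram := insert μ (upCovers μ)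
def downSet (μ : YoungDiagram) : Finset YoungDiagram := insert μ (downCovers μ)

lemma mem_upSet {μ ν : YoungDiagram} : ν ∈ upSet μ ↔ μ ≤ ν ∧ ν.card ≤ μ.card + 1 := by
  unfold upSet
  simp only [Finset.mem_insert, mem_upCovers]
  constructor
  · rintro (rfl | ⟨h1, h2⟩)
    · exact ⟨le_rfl, by omega⟩
    · exact ⟨h1, by omega⟩
  · rintro ⟨h1, h2⟩
    have h3 := card_le_of_le h1
    rcases Nat.lt_or_ge ν.card (μ.card + 1) with h4 | h4
    · left; exact (eq_of_le_of_card_le h1 (by omega)).symm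
    · right; exact ⟨h1, by omega⟩

lemma mem_downSet {μ κ : YoungDiagram} : κ ∈ downSet μ ↔ κ ≤ μ ∧ μ.card ≤ κ.card + 1 := by
  unfold downSet
  simp only [Finset.mem_insert, mem_downCovers]
  constructor
  · rintro (rfl | ⟨h1, h2⟩)
    · exact ⟨le_rfl, by omega⟩
    · exact ⟨h1, by omega⟩
  · rintro ⟨h1, h2⟩
    have h3 := card_le_of_le h1
    rcases Nat.lt_or_ge κ.card μ.card with h4 | h4
    · right; exact ⟨h1, by omega⟩
    · left; exact eq_of_le_of_card_le h1 (by omega)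


lemma card_sup_add_card_inf (μ ν : YoungDiagram) :
    (μ ⊔ ν).card + (μ ⊓ ν).card = μ.card + ν.card := by
  show (μ ⊔ ν).cells.card + (μ ⊓ ν).cells.card = μ.cells.card + ν.cells.card
  rw [cells_sup, cells_inf]
  exact Finset.card_union_add_card_inter _ _

lemma ne_bot_of_card_pos {μ : YoungDiagram} (h : 0 < μ.card) : μ ≠ ⊥ := by
  intro hcon
  rw [hcon] at h
  simp [YoungDiagram.card, cells_bot] at h

lemma card_pos_of_ne_bot {μ : YoungDiagram} (h : μ ≠ ⊥) : 0 < μ.card := by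
  rcases Nat.eq_zero_or_pos μ.card with h0 | h0
  · exfalso
    apply h
    ext c
    simp only [Finset.card_eq_zero] at h0
    rw [h0, cells_bot]
  · exact h0

def nsyt (μ : YoungDiagram) : ℕ :=
  if h : μ = ⊥ then 1
  else ∑ i ∈ (removableRows μ).attach,
    have : (delCell μ i.1).card < μ.card := by
      have := card_delCell (mem_removableRows.mp i.2)
      omega
    nsyt (delCell μ i.1)
termination_by μ.card

@[simp] lemma nsyt_bot : nsyt ⊥ = 1 := by rw [nsyt]; simp

lemma delCell_injOn (μ : YoungDiagram) :
    ∀ a ∈ removableRows μ, ∀ b ∈ removableRows μ, delCell μ a = delCell μ b → a = b := by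
  intro a ha b hb hab
  by_contra hne
  have ha' := mem_removableRows.mp ha
  have hb' := mem_removableRows.mp hb
  have h1 : (delCell μ a).rowLen a = μ.rowLen a - 1 := rowLen_delCell_self ha'
  have h2 : (delCell μ b).rowLen a = μ.rowLen a := rowLen_delCell_ne hb' hne
  have := removable_pos ha'
  rw [hab] at h1
  omega

lemma nsyt_eq_sum {μ : YoungDiagram} (h : μ ≠ ⊥) :
    nsyt μ = ∑ κ ∈ downCovers μ, nsyt κ := by
  rw [nsyt, dif_neg h]
  unfold downCovers
  rw [Finset.sum_image (delCell_injOn μ), ← Finset.sum_attach (removableRows μ) (fun i => nsyt (delCell μ i))]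

lemma lat_up {μ ν ρ : YoungDiagram} (hν : ν ∈ upCovers μ) (hρ : ρ ∈ downCovers ν) (hne : ρ ≠ μ) :
    μ ⊓ ρ ∈ downCovers μ ∧ ρ ∈ upCovers (μ ⊓ ρ) ∧ μ ⊔ ρ = ν := by
  obtain ⟨hμν, hcν⟩ := mem_upCovers.mp hν
  obtain ⟨hρν, hcρ⟩ := mem_downCovers.mp hρ
  have hρc : ρ.card = μ.card := by omega
  have hsup_le : μ ⊔ ρ ≤ ν := sup_le hμν hρν
  have hsup_card : (μ ⊔ ρ).card = μ.card + 1 := by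
    have h1 : (μ ⊔ ρ).card ≤ ν.card := card_le_of_le hsup_le
    have h2 : μ.card ≤ (μ ⊔ ρ).card := card_le_of_le le_sup_left
    rcases Nat.lt_or_ge (μ ⊔ ρ).card (μ.card + 1) with h3 | h3
    · exfalso
      have hμsup : μ = μ ⊔ ρ := eq_of_le_of_card_le le_sup_left (by omega)
      have hρμ : ρ ≤ μ := by
        rw [hμsup]
        exact le_sup_right
      exact hne (eq_of_le_of_card_le hρμ (by omega))
    · omega
  have hsupν : μ ⊔ ρ = ν := eq_of_le_of_card_le hsup_le (by omega)
  have hinf_card : μ.card = (μ ⊓ ρ).card + 1 := by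
    have := card_sup_add_card_inf μ ρ
    omega
  refine ⟨mem_downCovers.mpr ⟨inf_le_left, hinf_card⟩,
    mem_upCovers.mpr ⟨inf_le_right, by omega⟩, hsupν⟩

lemma lat_down {μ κ ρ : YoungDiagram} (hκ : κ ∈ downCovers μ) (hρ : ρ ∈ upCovers κ) (hne : ρ ≠ μ) :
    μ ⊔ ρ ∈ upCovers μ ∧ ρ ∈ downCovers (μ ⊔ ρ) ∧ μ ⊓ ρ = κ := by
  obtain ⟨hκμ, hcμ⟩ := mem_downCovers.mp hκ
  obtain ⟨hκρ, hcρ⟩ := mem_upCovers.mp hρ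
  have hρc : ρ.card = μ.card := by omega
  have hκ_le : κ ≤ μ ⊓ ρ := le_inf hκμ hκρ
  have hinf_card : (μ ⊓ ρ).card = κ.card := by
    have h1 : κ.card ≤ (μ ⊓ ρ).card := card_le_of_le hκ_le
    have h2 : (μ ⊓ ρ).card ≤ μ.card := card_le_of_le inf_le_left
    rcases Nat.lt_or_ge (μ ⊓ ρ).card μ.card with h3 | h3
    · omega
    · exfalso
      have hμinf : μ ⊓ ρ = μ := eq_of_le_of_card_le inf_le_left (by omega)
      have hμρ : μ ≤ ρ := by
        rw [← hμinf]
        exact inf_le_right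
      exact hne (eq_of_le_of_card_le hμρ (by omega)).symm
  have hinfκ : μ ⊓ ρ = κ := (eq_of_le_of_card_le hκ_le (by omega)).symm
  have hsup_card : (μ ⊔ ρ).card = μ.card + 1 := by
    have := card_sup_add_card_inf μ ρ
    omega
  refine ⟨mem_upCovers.mpr ⟨le_sup_left, hsup_card⟩,
    mem_downCovers.mpr ⟨le_sup_right, by omega⟩, hinfκ⟩

lemma sum_upCovers_step (μ : YoungDiagram)
    (IH : ∀ κ ∈ downCovers μ, ∑ ρ ∈ upCovers κ, nsyt ρ = (κ.card + 1) * nsyt κ) :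
    ∑ ν ∈ upCovers μ, nsyt ν = (μ.card + 1) * nsyt μ := by
  have hT : ∑ ν ∈ upCovers μ, nsyt ν
      = (upCovers μ).card * nsyt μ + ∑ ν ∈ upCovers μ, ∑ ρ ∈ (downCovers ν).erase μ, nsyt ρ := by
    have h1 : ∀ ν ∈ upCovers μ, nsyt ν = nsyt μ + ∑ ρ ∈ (downCovers ν).erase μ, nsyt ρ := by
      intro ν hν
      obtain ⟨hle, hc⟩ := mem_upCovers.mp hν
      have hbot : ν ≠ ⊥ := ne_bot_of_card_pos (by omega)
      rw [nsyt_eq_sum hbot]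
      have hμmem : μ ∈ downCovers ν := mem_downCovers.mpr ⟨hle, hc⟩
      rw [← Finset.add_sum_erase _ _ hμmem]
    rw [Finset.sum_congr rfl h1, Finset.sum_add_distrib, Finset.sum_const, smul_eq_mul]
  have hP : ∑ ν ∈ upCovers μ, ∑ ρ ∈ (downCovers ν).erase μ, nsyt ρ
      = ∑ κ ∈ downCovers μ, ∑ ρ ∈ (upCovers κ).erase μ, nsyt ρ := by
    rw [← Finset.sum_sigma (upCovers μ) (fun ν => (downCovers ν).erase μ) (fun x => nsyt x.2),
      ← Finset.sum_sigma (downCovers μ) (fun κ => (upCovers κ).erase μ) (fun x => nsyt x.2)]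
    apply Finset.sum_nbij' (i := fun x => ⟨μ ⊓ x.2, x.2⟩) (j := fun x => ⟨μ ⊔ x.2, x.2⟩)
    · intro x hx
      rw [Finset.mem_sigma] at hx ⊢
      obtain ⟨h1, h2⟩ := hx
      rw [Finset.mem_erase] at h2
      obtain ⟨hne, h2⟩ := h2
      obtain ⟨ha, hb, _⟩ := lat_up h1 h2 hne
      exact ⟨ha, Finset.mem_erase.mpr ⟨hne, hb⟩⟩
    · intro x hx
      rw [Finset.mem_sigma] at hx ⊢
      obtain ⟨h1, h2⟩ := hx
      rw [Finset.mem_erase] at h2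
      obtain ⟨hne, h2⟩ := h2
      obtain ⟨ha, hb, _⟩ := lat_down h1 h2 hne
      exact ⟨ha, Finset.mem_erase.mpr ⟨hne, hb⟩⟩
    · intro x hx
      rw [Finset.mem_sigma] at hx
      obtain ⟨h1, h2⟩ := hx
      rw [Finset.mem_erase] at h2
      obtain ⟨hne, h2⟩ := h2
      obtain ⟨_, _, hsup⟩ := lat_up h1 h2 hne
      exact Sigma.ext hsup (by simp)
    · intro x hx
      rw [Finset.mem_sigma] at hx
      obtain ⟨h1, h2⟩ := hx
      rw [Finset.mem_erase] at h2
      obtain ⟨hne, h2⟩ := h2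
      obtain ⟨_, _, hinf⟩ := lat_down h1 h2 hne
      exact Sigma.ext hinf (by simp)
    · intro x hx
      rfl
  have hsum_down : μ.card * ∑ κ ∈ downCovers μ, nsyt κ = μ.card * nsyt μ := by
    rcases eq_or_ne μ ⊥ with rfl | hbot
    · have : (⊥ : YoungDiagram).card = 0 := by simp [YoungDiagram.card, cells_bot]
      rw [this]
      simp
    · rw [← nsyt_eq_sum hbot]
  have hQsum : (∑ κ ∈ downCovers μ, ∑ ρ ∈ (upCovers κ).erase μ, nsyt ρ)
      + (downCovers μ).card * nsyt μ = μ.card * nsyt μ := by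
    rw [← hsum_down, Finset.mul_sum]
    have hconst : (downCovers μ).card * nsyt μ = ∑ _κ ∈ downCovers μ, nsyt μ := by
      rw [Finset.sum_const, smul_eq_mul]
    rw [hconst, ← Finset.sum_add_distrib]
    apply Finset.sum_congr rfl
    intro κ hκ
    obtain ⟨hle, hc⟩ := mem_downCovers.mp hκ
    have hμ' : μ ∈ upCovers κ := mem_upCovers.mpr ⟨hle, hc⟩
    rw [Finset.sum_erase_add _ _ hμ', IH κ hκ]
    congr 1
    omega
  have key : (∑ ν ∈ upCovers μ, nsyt ν) + (downCovers μ).card * nsyt μ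
      = (μ.card + 1) * nsyt μ + (downCovers μ).card * nsyt μ := by
    rw [hT, hP, card_upCovers, add_assoc, hQsum]
    ring
  exact Nat.add_right_cancel key

lemma sum_upCovers_nsyt (μ : YoungDiagram) :
    ∑ ν ∈ upCovers μ, nsyt ν = (μ.card + 1) * nsyt μ := by
  suffices H : ∀ n (μ : YoungDiagram), μ.card = n →
      ∑ ν ∈ upCovers μ, nsyt ν = (μ.card + 1) * nsyt μ from H _ μ rfl
  intro n
  induction n using Nat.strong_induction_on with
  | _ n ih =>
    intro μ hμ
    apply sum_upCovers_step μ
    intro κ hκ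
    have := (mem_downCovers.mp hκ).2
    exact ih κ.card (by omega) κ rfl

lemma stirling_eq_zero {n j : ℕ} (h : n < j) : stirling n j = 0 := by
  induction n generalizing j with
  | zero =>
    match j, h with
    | j + 1, _ => rfl
  | succ n ih =>
    match j, h with
    | j + 1, h =>
      show (j + 1) * stirling n (j + 1) + stirling n j = 0
      rw [ih (by omega), ih (by omega)]
      simp

def c (k r : ℕ) : ℕ := ∑ m ∈ Finset.range (k + 1), stirling k m * m.choose r

lemma c_zero_right (k : ℕ) : c k 0 = bell k := by
  unfold c bell
  apply Finset.sum_congr rfl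
  intro m _
  rw [Nat.choose_zero_right, mul_one]

lemma c_zero (r : ℕ) : c 0 r = Nat.choose 0 r := by
  unfold c
  rw [Finset.sum_range_one]
  show 1 * Nat.choose 0 r = _
  rw [one_mul]

lemma mul_choose_identity (m r : ℕ) :
    m * m.choose r = r * m.choose r + (r + 1) * m.choose (r + 1) := by
  rcases le_or_gt r m with h | h
  · have h1 : (r + 1) * m.choose (r + 1) = m.choose r * (m - r) := by
      rw [mul_comm]
      exact Nat.choose_succ_right_eq m r
    rw [h1]
    have : m = r + (m - r) := by omega
    calc m * m.choose r = (r + (m - r)) * m.choose r := by rw [← this]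
      _ = r * m.choose r + (m - r) * m.choose r := by rw [add_mul]
      _ = r * m.choose r + m.choose r * (m - r) := by rw [mul_comm (m - r)]
  · rw [Nat.choose_eq_zero_of_lt h, Nat.choose_eq_zero_of_lt (by omega)]
    simp

lemma c_rec (k r : ℕ) :
    c (k + 1) r = (r + 1) * (c k r + c k (r + 1)) + (if r = 0 then 0 else c k (r - 1)) := by
  have expand : c (k + 1) r
      = ∑ j ∈ Finset.range (k + 1), stirling (k + 1) (j + 1) * (j + 1).choose r := by
    unfold c
    rw [Finset.sum_range_succ']
    show _ + stirling (k+1) 0 * _ = _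
    rw [show stirling (k + 1) 0 = 0 from rfl]
    simp
  rw [expand]
  have step1 : ∀ j, stirling (k + 1) (j + 1) * (j + 1).choose r
      = (j + 1) * stirling k (j + 1) * (j + 1).choose r + stirling k j * (j + 1).choose r := by
    intro j
    rw [show stirling (k + 1) (j + 1) = (j + 1) * stirling k (j + 1) + stirling k j from rfl,
      add_mul]
  rw [Finset.sum_congr rfl (fun j _ => step1 j), Finset.sum_add_distrib]
  -- first sum
  have first : ∑ j ∈ Finset.range (k + 1), (j + 1) * stirling k (j + 1) * (j + 1).choose r
      = r * c k r + (r + 1) * c k (r + 1) := by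
    have reindex : ∑ j ∈ Finset.range (k + 1), (j + 1) * stirling k (j + 1) * (j + 1).choose r
        = ∑ m ∈ Finset.range (k + 1), m * stirling k m * m.choose r := by
      set g : ℕ → ℕ := fun m => m * stirling k m * m.choose r with hg
      have h1 : ∑ m ∈ Finset.range (k + 2), g m = (∑ j ∈ Finset.range (k + 1), g (j + 1)) + g 0 :=
        Finset.sum_range_succ' g (k + 1)
      have h2 : ∑ m ∈ Finset.range (k + 2), g m = (∑ m ∈ Finset.range (k + 1), g m) + g (k + 1) :=
        Finset.sum_range_succ g (k + 1)
      have hg0 : g 0 = 0 := by simp [hg]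
      have hgk : g (k + 1) = 0 := by simp [hg, stirling_eq_zero (show k < k + 1 by omega)]
      have : ∑ j ∈ Finset.range (k + 1), g (j + 1) = ∑ m ∈ Finset.range (k + 1), g m := by
        omega
      exact this
    rw [reindex]
    have pointwise : ∀ m, m * stirling k m * m.choose r
        = r * (stirling k m * m.choose r) + (r + 1) * (stirling k m * m.choose (r + 1)) := by
      intro m
      calc m * stirling k m * m.choose r = stirling k m * (m * m.choose r) := by ring
        _ = stirling k m * (r * m.choose r + (r + 1) * m.choose (r + 1)) := by
            rw [mul_choose_identity]
        _ = _ := by ring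
    rw [Finset.sum_congr rfl (fun m _ => pointwise m), Finset.sum_add_distrib,
      ← Finset.mul_sum, ← Finset.mul_sum]
    rfl
  -- second sum
  have second : ∑ j ∈ Finset.range (k + 1), stirling k j * (j + 1).choose r
      = c k r + (if r = 0 then 0 else c k (r - 1)) := by
    rcases Nat.eq_zero_or_pos r with rfl | hr
    · simp only [Nat.choose_zero_right, if_pos rfl, add_zero]
      unfold c
      simp
    · rw [if_neg (by omega)]
      have hr' : r = (r - 1) + 1 := by omega
      obtain ⟨t, rfl⟩ : ∃ t, r = t + 1 := ⟨r - 1, by omega⟩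
      have pt : ∀ j : ℕ, stirling k j * (j + 1).choose (t + 1)
          = stirling k j * j.choose (t + 1 - 1) + stirling k j * j.choose (t + 1) := by
        intro j
        rw [Nat.choose_succ_succ, mul_add]
        simp
      rw [Finset.sum_congr rfl (fun j _ => pt j), Finset.sum_add_distrib]
      rw [add_comm]
      rfl
  rw [first, second]
  ring

def wcount : ℕ → YoungDiagram → ℕ
  | 0, l => if l = ⊥ then 1 else 0
  | k + 1, l => ∑ m ∈ downSet l, ∑ ν ∈ upSet m, wcount k ν

lemma notMem_upCovers_self (μ : YoungDiagram) : μ ∉ upCovers μ := by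
  intro h
  have := (mem_upCovers.mp h).2
  omega

lemma notMem_downCovers_self (μ : YoungDiagram) : μ ∉ downCovers μ := by
  intro h
  have := (mem_downCovers.mp h).2
  omega

lemma downCovers_bot : downCovers (⊥ : YoungDiagram) = ∅ := by
  apply Finset.eq_empty_of_forall_notMem
  intro κ h
  obtain ⟨hle, hc⟩ := mem_downCovers.mp h
  have : (⊥ : YoungDiagram).card = 0 := by simp [YoungDiagram.card, cells_bot]
  omega

lemma card_bot : (⊥ : YoungDiagram).card = 0 := by simp [YoungDiagram.card, cells_bot]

lemma wcount_eq (k : ℕ) (l : YoungDiagram) : wcount k l = c k l.card * nsyt l := by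
  induction k generalizing l with
  | zero =>
    show (if l = ⊥ then 1 else 0) = _
    rcases eq_or_ne l ⊥ with rfl | h
    · rw [if_pos rfl, card_bot, c_zero, nsyt_bot]
      simp
    · rw [if_neg h, c_zero, Nat.choose_eq_zero_of_lt (card_pos_of_ne_bot h)]
      simp
  | succ k ih =>
    show ∑ m ∈ downSet l, ∑ ν ∈ upSet m, wcount k ν = _
    have inner : ∀ m : YoungDiagram, ∑ ν ∈ upSet m, wcount k ν
        = (c k m.card + c k (m.card + 1) * (m.card + 1)) * nsyt m := by
      intro m
      unfold upSet
      rw [Finset.sum_insert (notMem_upCovers_self m), ih]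
      have hcong : ∀ ν ∈ upCovers m, wcount k ν = c k (m.card + 1) * nsyt ν := by
        intro ν hν
        rw [ih, (mem_upCovers.mp hν).2]
      rw [Finset.sum_congr rfl hcong, ← Finset.mul_sum, sum_upCovers_nsyt]
      ring
    rw [Finset.sum_congr rfl (fun m _ => inner m)]
    unfold downSet
    rw [Finset.sum_insert (notMem_downCovers_self l)]
    rcases eq_or_ne l ⊥ with rfl | hbot
    · rw [downCovers_bot]
      simp only [Finset.sum_empty, add_zero, card_bot, nsyt_bot]
      rw [c_rec]
      simp
    · set n := l.card with hn
      have hnpos : 0 < n := card_pos_of_ne_bot hbot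
      have hcong2 : ∀ m ∈ downCovers l,
          (c k m.card + c k (m.card + 1) * (m.card + 1)) * nsyt m
          = (c k (n - 1) + c k n * n) * nsyt m := by
        intro m hm
        have := (mem_downCovers.mp hm).2
        have h1 : m.card = n - 1 := by omega
        rw [h1]
        have h2 : n - 1 + 1 = n := by omega
        rw [h2]
      rw [Finset.sum_congr rfl hcong2, ← Finset.mul_sum, ← nsyt_eq_sum hbot, c_rec,
        if_neg (by omega)]
      ring


def IsWalk (k : ℕ) (l : YoungDiagram) (f : ℕ → YoungDiagram) : Prop :=
  f 0 = ⊥ ∧ f (2 * k) = l ∧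
    (∀ j < k,
      f (2 * j + 1) ≤ f (2 * j) ∧ (f (2 * j)).card ≤ (f (2 * j + 1)).card + 1 ∧
      f (2 * j + 1) ≤ f (2 * j + 2) ∧ (f (2 * j + 2)).card ≤ (f (2 * j + 1)).card + 1) ∧
    (∀ i, 2 * k < i → f i = ⊥)

lemma walk_zero_subsingleton (l : YoungDiagram) : Subsingleton {f // IsWalk 0 l f} := by
  constructor
  rintro ⟨f, hf0, -, -, hft⟩ ⟨g, hg0, -, -, hgt⟩
  apply Subtype.ext
  funext i
  show f i = g i
  rcases i with - | i
  · rw [hf0, hg0]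
  · rw [hft (i+1) (by omega), hgt (i+1) (by omega)]

lemma walk_zero_card (l : YoungDiagram) : Nat.card {f // IsWalk 0 l f} = wcount 0 l := by
  show _ = if l = ⊥ then 1 else 0
  rcases eq_or_ne l ⊥ with rfl | hbot
  · rw [if_pos rfl]
    have hw : IsWalk 0 ⊥ (fun _ => (⊥ : YoungDiagram)) :=
      ⟨rfl, rfl, fun j hj => absurd hj (Nat.not_lt_zero j), fun i _ => rfl⟩
    haveI : Subsingleton {f // IsWalk 0 (⊥ : YoungDiagram) f} := walk_zero_subsingleton ⊥
    haveI : Unique {f // IsWalk 0 (⊥ : YoungDiagram) f} := uniqueOfSubsingleton ⟨_, hw⟩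
    exact Nat.card_unique
  · rw [if_neg hbot]
    haveI : IsEmpty {f // IsWalk 0 l f} := by
      constructor
      rintro ⟨f, hf0, hfl, -, -⟩
      exact hbot (by rw [← hfl, show 2 * 0 = 0 from rfl, hf0])
    exact Nat.card_of_isEmpty

/-- extend a walk of length 2k by a half-step down to m and half-step up to l -/
def ext2 (k : ℕ) (l m : YoungDiagram) (g : ℕ → YoungDiagram) : ℕ → YoungDiagram := fun i =>
  if i ≤ 2 * k then g i else if i = 2 * k + 1 then m else if i = 2 * k + 2 then l else ⊥

lemma isWalk_ext2 {k : ℕ} {l m ν : YoungDiagram} {g : ℕ → YoungDiagram}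
    (hm : m ∈ downSet l) (hν : ν ∈ upSet m) (hg : IsWalk k ν g) :
    IsWalk (k + 1) l (ext2 k l m g) := by
  obtain ⟨hg0, hg2k, hgst, hgt⟩ := hg
  obtain ⟨hml, hcl⟩ := mem_downSet.mp hm
  obtain ⟨hmν, hcν⟩ := mem_upSet.mp hν
  refine ⟨?_, ?_, ?_, ?_⟩
  · show (if 0 ≤ 2 * k then g 0 else _) = ⊥
    rw [if_pos (by omega)]
    exact hg0
  · show ext2 k l m g (2 * (k + 1)) = l
    unfold ext2
    rw [if_neg (by omega), if_neg (by omega), if_pos (by omega)]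
  · intro j hj
    rcases Nat.lt_or_ge j k with hjk | hjk
    · have e1 : ext2 k l m g (2 * j) = g (2 * j) := by unfold ext2; rw [if_pos (by omega)]
      have e2 : ext2 k l m g (2 * j + 1) = g (2 * j + 1) := by
        unfold ext2; rw [if_pos (by omega)]
      have e3 : ext2 k l m g (2 * j + 2) = g (2 * j + 2) := by
        unfold ext2; rw [if_pos (by omega)]
      rw [e1, e2, e3]
      exact hgst j hjk
    · have hjk' : j = k := by omega
      have e1 : ext2 k l m g (2 * j) = ν := by
        unfold ext2; rw [if_pos (by omega), hjk']; exact hg2k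
      have e2 : ext2 k l m g (2 * j + 1) = m := by
        unfold ext2; rw [if_neg (by omega), if_pos (by omega)]
      have e3 : ext2 k l m g (2 * j + 2) = l := by
        unfold ext2; rw [if_neg (by omega), if_neg (by omega), if_pos (by omega)]
      rw [e1, e2, e3]
      exact ⟨hmν, hcν, hml, hcl⟩
  · intro i hi
    unfold ext2
    rw [if_neg (by omega), if_neg (by omega), if_neg (by omega)]

def WalkIdx (k : ℕ) (l : YoungDiagram) : Finset ((_ : YoungDiagram) × YoungDiagram) :=
  (downSet l).sigma (fun m => upSet m)

def Φ (k : ℕ) (l : YoungDiagram) :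
    (Σ x : ↥(WalkIdx k l), {f // IsWalk k x.1.2 f}) → {f // IsWalk (k + 1) l f} :=
  fun z =>
    ⟨ext2 k l z.1.1.1 z.2.1,
      isWalk_ext2 (Finset.mem_sigma.mp z.1.2).1 (Finset.mem_sigma.mp z.1.2).2 z.2.2⟩

lemma Φ_bijective (k : ℕ) (l : YoungDiagram) : Function.Bijective (Φ k l) := by
  constructor
  · rintro ⟨⟨⟨m, ν⟩, hx⟩, ⟨g, hg⟩⟩ ⟨⟨⟨m', ν'⟩, hx'⟩, ⟨g', hg'⟩⟩ h
    have hfun : ext2 k l m g = ext2 k l m' g' := congrArg Subtype.val h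
    have hmm : m = m' := by
      have := congrFun hfun (2 * k + 1)
      unfold ext2 at this
      rwa [if_neg (by omega), if_pos rfl, if_neg (by omega), if_pos rfl] at this
    have hgg : g = g' := by
      funext i
      rcases le_or_gt i (2 * k) with hi | hi
      · have := congrFun hfun i
        unfold ext2 at this
        rwa [if_pos hi, if_pos hi] at this
      · rw [hg.2.2.2 i hi, hg'.2.2.2 i hi]
    have hνν : ν = ν' := by
      have e1 : g (2 * k) = ν := hg.2.1
      have e2 : g' (2 * k) = ν' := hg'.2.1
      rw [← e1, hgg]
      exact e2
    subst hmm; subst hgg; subst hνν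
    rfl
  · rintro ⟨f, hf⟩
    obtain ⟨hf0, hfl, hfst, hft⟩ := hf
    have hfl' : f (2 * k + 2) = l := by
      rw [show 2 * k + 2 = 2 * (k + 1) by ring, hfl]
    obtain ⟨hs1, hs2, hs3, hs4⟩ := hfst k (by omega)
    have hmem : (⟨f (2 * k + 1), f (2 * k)⟩ : (_ : YoungDiagram) × YoungDiagram) ∈ WalkIdx k l := by
      apply Finset.mem_sigma.mpr
      constructor
      · exact mem_downSet.mpr ⟨by rw [← hfl']; exact hs3, by rw [hfl'] at hs4; exact hs4⟩
      · exact mem_upSet.mpr ⟨hs1, hs2⟩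
    have htrunc : IsWalk k (f (2 * k)) (fun i => if i ≤ 2 * k then f i else ⊥) := by
      refine ⟨?_, ?_, ?_, ?_⟩
      · show (if 0 ≤ 2 * k then f 0 else _) = ⊥
        rw [if_pos (by omega)]; exact hf0
      · show (if 2 * k ≤ 2 * k then f (2 * k) else _) = f (2 * k)
        rw [if_pos le_rfl]
      · intro j hj
        have e1 : (if 2 * j ≤ 2 * k then f (2 * j) else (⊥ : YoungDiagram)) = f (2 * j) := by
          rw [if_pos (by omega)]
        have e2 : (if 2 * j + 1 ≤ 2 * k then f (2 * j + 1) else (⊥ : YoungDiagram))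
            = f (2 * j + 1) := by rw [if_pos (by omega)]
        have e3 : (if 2 * j + 2 ≤ 2 * k then f (2 * j + 2) else (⊥ : YoungDiagram))
            = f (2 * j + 2) := by rw [if_pos (by omega)]
        simp only [e1, e2, e3]
        exact hfst j (by omega)
      · intro i hi
        show (if i ≤ 2 * k then f i else (⊥ : YoungDiagram)) = ⊥
        rw [if_neg (by omega)]
    refine ⟨⟨⟨⟨f (2 * k + 1), f (2 * k)⟩, hmem⟩, ⟨_, htrunc⟩⟩, ?_⟩
    apply Subtype.ext
    funext i
    show ext2 k l (f (2 * k + 1)) (fun i => if i ≤ 2 * k then f i else ⊥) i = f i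
    unfold ext2
    rcases le_or_gt i (2 * k) with hi | hi
    · rw [if_pos hi]
      show (if i ≤ 2 * k then f i else (⊥ : YoungDiagram)) = f i
      rw [if_pos hi]
    · rw [if_neg (by omega)]
      rcases eq_or_ne i (2 * k + 1) with rfl | h1
      · rw [if_pos rfl]
      · rw [if_neg h1]
        rcases eq_or_ne i (2 * k + 2) with rfl | h2
        · rw [if_pos rfl]
          exact hfl'.symm
        · rw [if_neg h2, (hft i (by omega)).symm]

lemma nat_card_sigma {I : Type*} [Fintype I] (F : I → Type*) [∀ i, Finite (F i)] :
    Nat.card (Σ i, F i) = ∑ i, Nat.card (F i) := by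
  haveI : ∀ i, Fintype (F i) := fun i => Fintype.ofFinite _
  rw [Nat.card_eq_fintype_card, Fintype.card_sigma]
  apply Finset.sum_congr rfl
  intro i _
  rw [Nat.card_eq_fintype_card]

lemma walk_finite : ∀ (k : ℕ) (l : YoungDiagram), Finite {f // IsWalk k l f} := by
  intro k
  induction k with
  | zero =>
    intro l
    haveI := walk_zero_subsingleton l
    exact Finite.of_subsingleton
  | succ k ih =>
    intro l
    haveI : ∀ x : ↥(WalkIdx k l), Finite {f // IsWalk k x.1.2 f} := fun x => ih _
    exact Finite.of_surjective (Φ k l) (Φ_bijective k l).2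

lemma walk_card : ∀ (k : ℕ) (l : YoungDiagram), Nat.card {f // IsWalk k l f} = wcount k l := by
  intro k
  induction k with
  | zero => exact walk_zero_card
  | succ k ih =>
    intro l
    haveI : ∀ x : ↥(WalkIdx k l), Finite {f // IsWalk k x.1.2 f} := fun x => walk_finite k _
    have e := Equiv.ofBijective (Φ k l) (Φ_bijective k l)
    rw [← Nat.card_congr e, nat_card_sigma]
    show ∑ x : ↥(WalkIdx k l), Nat.card {f // IsWalk k x.1.2 f}
      = ∑ m ∈ downSet l, ∑ ν ∈ upSet m, wcount k ν
    rw [Finset.sum_coe_sort (WalkIdx k l) (fun x => Nat.card {f // IsWalk k x.2 f})]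
    unfold WalkIdx
    rw [Finset.sum_sigma]
    apply Finset.sum_congr rfl
    intro m _
    apply Finset.sum_congr rfl
    intro ν _
    exact ih ν

lemma walk_card_bot (k : ℕ) : Nat.card {f // IsWalk k ⊥ f} = bell k := by
  rw [walk_card, wcount_eq, card_bot, nsyt_bot, c_zero_right, mul_one]

end SVT

/-- Walks of length `2k` on Young's lattice starting and ending at the empty partition,
where each odd step removes zero or one box and each even step adds zero or one box. -/
theorem stmt3 (k₁ k₂ : ℕ) :
    Nat.card {f : ℕ → YoungDiagram //
      f 0 = ⊥ ∧ f (2 * (k₁ + k₂)) = ⊥ ∧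
      (∀ j < k₁ + k₂,
        f (2 * j + 1) ≤ f (2 * j) ∧ (f (2 * j)).card ≤ (f (2 * j + 1)).card + 1 ∧
        f (2 * j + 1) ≤ f (2 * j + 2) ∧ (f (2 * j + 2)).card ≤ (f (2 * j + 1)).card + 1) ∧
      (∀ i, 2 * (k₁ + k₂) < i → f i = ⊥)} =
    bell (k₁ + k₂) := by
  exact SVT.walk_card_bot (k₁ + k₂)
end

section
/- For every integer k ≥ 1, the number of symmetric set partitions of {-k,...,-1,1,...,k} (those for which -X is a block whenever X is a block) equals ∑_{j=0}^{k} B(k,j) · I_j, where B(k,j) is the number of set partitions of {1,...,k} with j marked blocks and I_j is the number of involutions in the symmetric group S_j. -/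
open Finset

/-- Number of involutions in the symmetric group on `j` letters. -/
noncomputable def involutions (j : ℕ) : ℕ := Nat.card {σ : Equiv.Perm (Fin j) // σ * σ = 1}

/-- `B(k,j)`: the number of set partitions of `{1,…,k}` with `j` marked blocks. -/
noncomputable def markedPartitions (k j : ℕ) : ℕ :=
  Nat.card {p : Finpartition (Finset.univ : Finset (Fin k)) × Finset (Finset (Fin k)) //
    p.2 ⊆ p.1.parts ∧ p.2.card = j}

/-- The set `{-k,…,-1,1,…,k}` inside `ℤ`. -/
noncomputable def pmSet (k : ℕ) : Finset ℤ := (Finset.Icc (-(k : ℤ)) k).erase 0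

namespace Stmt4

variable {k : ℕ}

def toZ (i : Fin k) : ℤ := (i : ℤ) + 1

lemma toZ_injective : Function.Injective (toZ (k := k)) := by
  intro a b h
  simp only [toZ, add_left_inj, Nat.cast_injective.eq_iff] at h
  exact Fin.ext (by exact_mod_cast h)

def fs (Y : Finset (Fin k)) : Finset ℤ := Y.image toZ

def posOf (X : Finset ℤ) : Finset (Fin k) := Finset.univ.filter (fun i => toZ i ∈ X)

def negSet (X : Finset ℤ) : Finset ℤ := X.image (fun x => -x)

@[simp] lemma mem_negSet {X : Finset ℤ} {x : ℤ} : x ∈ negSet X ↔ -x ∈ X := by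
  simp only [negSet, Finset.mem_image]
  constructor
  · rintro ⟨y, hy, rfl⟩; simpa
  · intro h; exact ⟨-x, h, by ring⟩

@[simp] lemma negSet_negSet {X : Finset ℤ} : negSet (negSet X) = X := by
  ext x; simp

@[simp] lemma mem_posOf {X : Finset ℤ} {i : Fin k} : i ∈ posOf X ↔ toZ i ∈ X := by
  simp [posOf]

@[simp] lemma toZ_mem_fs {Y : Finset (Fin k)} {i : Fin k} : toZ i ∈ fs Y ↔ i ∈ Y := by
  simp only [fs, Finset.mem_image]
  exact ⟨fun ⟨j, hj, h⟩ => toZ_injective h ▸ hj, fun h => ⟨i, h, rfl⟩⟩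

@[simp] lemma posOf_fs {Y : Finset (Fin k)} : posOf (fs Y) = Y := by
  ext i; simp

lemma toZ_pos (i : Fin k) : 0 < toZ i := by
  simp only [toZ]; positivity

lemma mem_pmSet {x : ℤ} : x ∈ pmSet k ↔ x ≠ 0 ∧ -(k : ℤ) ≤ x ∧ x ≤ k := by
  simp [pmSet, Finset.mem_erase, and_assoc]

lemma toZ_mem_pmSet (i : Fin k) : toZ i ∈ pmSet k := by
  rw [mem_pmSet]
  have h1 := toZ_pos i
  have h2 : (i : ℤ) < k := by exact_mod_cast i.isLt
  refine ⟨by omega, by simp only [toZ]; omega, by simp only [toZ] at h1 ⊢; omega⟩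

lemma neg_mem_pmSet {x : ℤ} (h : x ∈ pmSet k) : -x ∈ pmSet k := by
  rw [mem_pmSet] at h ⊢; omega

lemma negSet_subset_pmSet {X : Finset ℤ} (h : X ⊆ pmSet k) : negSet X ⊆ pmSet k := by
  intro x hx
  rw [mem_negSet] at hx
  simpa using neg_mem_pmSet (h hx)

lemma exists_toZ {x : ℤ} (hx : x ∈ pmSet k) (hpos : 0 < x) : ∃ i : Fin k, toZ i = x := by
  rw [mem_pmSet] at hx
  refine ⟨⟨(x - 1).toNat, by omega⟩, ?_⟩
  simp only [toZ]
  omega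

lemma fs_subset_pmSet {Y : Finset (Fin k)} : fs Y ⊆ pmSet k := by
  intro x hx
  simp only [fs, Finset.mem_image] at hx
  obtain ⟨i, _, rfl⟩ := hx
  exact toZ_mem_pmSet i

lemma pos_of_mem_fs {Y : Finset (Fin k)} {x : ℤ} (h : x ∈ fs Y) : 0 < x := by
  simp only [fs, Finset.mem_image] at h
  obtain ⟨i, _, rfl⟩ := h
  exact toZ_pos i

lemma fs_posOf_subset {W : Finset ℤ} : fs (posOf (k := k) W) ⊆ W := by
  intro x hx
  simp only [fs, Finset.mem_image] at hx
  obtain ⟨i, hi, rfl⟩ := hx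
  simpa using hi

lemma mem_fs_posOf {W : Finset ℤ} (hW : W ⊆ pmSet k) {x : ℤ} (hx : x ∈ W) (hpos : 0 < x) :
    x ∈ fs (posOf (k := k) W) := by
  obtain ⟨i, rfl⟩ := exists_toZ (hW hx) hpos
  simpa using hx

lemma posOf_negSet_fs {Z : Finset (Fin k)} : posOf (k := k) (negSet (fs Z)) = ∅ := by
  ext i
  simp only [mem_posOf, mem_negSet, Finset.notMem_empty, iff_false]
  intro h
  exact absurd (pos_of_mem_fs h) (by have := toZ_pos i; omega)

lemma fs_nonempty {Y : Finset (Fin k)} (h : Y.Nonempty) : (fs Y).Nonempty :=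
  h.image _

lemma negSet_nonempty {X : Finset ℤ} (h : X.Nonempty) : (negSet X).Nonempty :=
  h.image _

@[simp] lemma posOf_union {X X' : Finset ℤ} : posOf (k := k) (X ∪ X') = posOf X ∪ posOf X' := by
  ext i; simp [mem_posOf]

@[simp] lemma negSet_union {X X' : Finset ℤ} : negSet (X ∪ X') = negSet X ∪ negSet X' :=
  Finset.image_union _ _


/-! ### Forward construction -/

section Forward

variable (P : Finpartition (pmSet k))

/-- The induced partition of `Fin k`. -/
def partsF : Finset (Finset (Fin k)) := (P.parts.image posOf).erase ∅

lemma mem_partsF {Y : Finset (Fin k)} :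
    Y ∈ partsF P ↔ Y ≠ ∅ ∧ ∃ X ∈ P.parts, posOf X = Y := by
  simp [partsF, Finset.mem_erase, eq_comm]

lemma block_unique {X X' : Finset ℤ} (hX : X ∈ P.parts) (hX' : X' ∈ P.parts)
    (h : posOf (k := k) X = posOf X') (hne : (posOf (k := k) X).Nonempty) : X = X' := by
  obtain ⟨i, hi⟩ := hne
  have hi' : i ∈ posOf X' := h ▸ hi
  rw [mem_posOf] at hi hi'
  exact P.eq_of_mem_parts hX hX' hi hi'

def pF : Finpartition (Finset.univ : Finset (Fin k)) where
  parts := partsF P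
  supIndep := by
    rw [Finset.supIndep_iff_pairwiseDisjoint]
    intro Y hY Y' hY' hne
    rw [Finset.mem_coe, mem_partsF] at hY hY'
    obtain ⟨hY0, X, hX, rfl⟩ := hY
    obtain ⟨hY0', X', hX', rfl⟩ := hY'
    simp only [Function.onFun, id_eq]
    rw [Finset.disjoint_left]
    intro i hi hi'
    exact hne (by rw [block_unique P hX hX' (by
      rw [mem_posOf] at hi hi'
      exact congrArg posOf (P.eq_of_mem_parts hX hX' hi hi')) ⟨i, hi⟩])
  sup_parts := by
    apply Finset.Subset.antisymm
    · intro i _; exact Finset.mem_univ i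
    · intro i _
      have hz : toZ i ∈ pmSet k := toZ_mem_pmSet i
      rw [← P.sup_parts, Finset.mem_sup] at hz
      obtain ⟨X, hX, hzX⟩ := hz
      rw [Finset.mem_sup]
      refine ⟨posOf X, ?_, by simpa using hzX⟩
      rw [mem_partsF]
      exact ⟨by
        intro h0
        have : i ∈ posOf X := by simpa using hzX
        simp [h0] at this, X, hX, rfl⟩
  bot_notMem := by simp [partsF]

@[simp] lemma pF_parts : (pF P).parts = partsF P := rfl

/-- The marked blocks. -/
def markedF : Finset (Finset (Fin k)) :=
  (P.parts.filter
    (fun X => (posOf (k := k) X).Nonempty ∧ (posOf (k := k) (negSet X)).Nonempty)).image posOf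

lemma mem_markedF {Y : Finset (Fin k)} :
    Y ∈ markedF P ↔ ∃ X ∈ P.parts, posOf X = Y ∧ Y.Nonempty ∧ (posOf (k := k) (negSet X)).Nonempty := by
  simp only [markedF, Finset.mem_image, Finset.mem_filter]
  constructor
  · rintro ⟨X, ⟨hX, h1, h2⟩, rfl⟩; exact ⟨X, hX, rfl, h1, h2⟩
  · rintro ⟨X, hX, rfl, h1, h2⟩; exact ⟨X, ⟨hX, h1, h2⟩, rfl⟩

lemma markedF_subset : markedF P ⊆ partsF P := by
  intro Y hY
  rw [mem_markedF] at hY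
  obtain ⟨X, hX, rfl, h1, h2⟩ := hY
  rw [mem_partsF]
  exact ⟨Finset.nonempty_iff_ne_empty.mp h1, X, hX, rfl⟩

/-- Predicate singling out the block over a marked positive part. -/
def QF (Y : Finset (Fin k)) (X : Finset ℤ) : Prop :=
  X ∈ P.parts ∧ posOf X = Y ∧ Y.Nonempty ∧ (posOf (k := k) (negSet X)).Nonempty

lemma QF_unique {Y : Finset (Fin k)} {X X' : Finset ℤ} (h : QF P Y X) (h' : QF P Y X') :
    X = X' :=
  block_unique P h.1 h'.1 (h.2.1.trans h'.2.1.symm) (h.2.1 ▸ h.2.2.1)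

open Classical in
noncomputable def sigF (Y : Finset (Fin k)) : Finset (Fin k) :=
  if h : ∃ X, QF P Y X then posOf (negSet h.choose) else Y

lemma sigF_eq {Y : Finset (Fin k)} {X : Finset ℤ} (h : QF P Y X) :
    sigF P Y = posOf (negSet X) := by
  have hex : ∃ X, QF P Y X := ⟨X, h⟩
  classical
  rw [sigF, dif_pos hex, QF_unique P hex.choose_spec h]

lemma sigF_eq_of_not {Y : Finset (Fin k)} (h : ¬ ∃ X, QF P Y X) : sigF P Y = Y := by
  classical
  rw [sigF, dif_neg h]

lemma not_marked_no_QF {Y : Finset (Fin k)} (h : Y ∉ markedF P) : ¬ ∃ X, QF P Y X := by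
  rintro ⟨X, hX, hpos, hne, hneg⟩
  exact h ((mem_markedF P).mpr ⟨X, hX, hpos, hne, hneg⟩)

variable (hP : ∀ X ∈ P.parts, negSet X ∈ P.parts)
include hP

lemma QF_neg {Y : Finset (Fin k)} {X : Finset ℤ} (h : QF P Y X) :
    QF P (posOf (negSet X)) (negSet X) := by
  obtain ⟨hX, hpos, hne, hneg⟩ := h
  exact ⟨hP X hX, rfl, hneg, by rw [negSet_negSet, hpos]; exact hne⟩

lemma sigF_invol : Function.Involutive (sigF P) := by
  intro Y
  by_cases h : ∃ X, QF P Y X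
  · obtain ⟨X, hX⟩ := h
    rw [sigF_eq P hX]
    have h2 := QF_neg P hP hX
    rw [sigF_eq P h2, negSet_negSet, hX.2.1]
  · rw [sigF_eq_of_not P h, sigF_eq_of_not P h]

noncomputable def sigPermF : Equiv.Perm (Finset (Fin k)) := (sigF_invol P hP).toPerm

@[simp] lemma sigPermF_apply (Y : Finset (Fin k)) : sigPermF P hP Y = sigF P Y := rfl

lemma sigPermF_sq : sigPermF P hP * sigPermF P hP = 1 := by
  ext Y
  simp [sigPermF, Equiv.Perm.mul_apply, sigF_invol P hP Y]

lemma sigPermF_fixes {Y : Finset (Fin k)} (h : Y ∉ markedF P) : sigPermF P hP Y = Y := by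
  simp only [sigPermF_apply]
  exact sigF_eq_of_not P (not_marked_no_QF P h)

end Forward


/-! ### Backward construction -/

section Backward

variable (p : Finpartition (Finset.univ : Finset (Fin k))) (M : Finset (Finset (Fin k)))
  (sig : Equiv.Perm (Finset (Fin k)))
  (hM : M ⊆ p.parts) (hsq : sig * sig = 1) (hfix : ∀ Y ∉ M, sig Y = Y)

include hsq in
lemma sig_sig (Y : Finset (Fin k)) : sig (sig Y) = Y := by
  have := congrArg (fun τ => τ Y) hsq
  simpa [Equiv.Perm.mul_apply] using this

include hfix hsq in
lemma sig_mem {Y : Finset (Fin k)} (h : Y ∈ M) : sig Y ∈ M := by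
  by_contra hc
  have h1 : sig (sig Y) = sig Y := hfix _ hc
  have h2 : sig (sig Y) = Y := sig_sig _ hsq Y
  rw [h2] at h1
  exact hc (h1 ▸ h)

/-- The block over `Y` in the reconstructed symmetric partition. -/
def gB (Y : Finset (Fin k)) : Finset ℤ :=
  if Y ∈ M then fs Y ∪ negSet (fs (sig Y)) else fs Y

def partsB : Finset (Finset ℤ) :=
  p.parts.image (gB M sig) ∪ p.parts.image (fun Y => negSet (gB M sig Y))

lemma mem_partsB {A : Finset ℤ} :
    A ∈ partsB p M sig ↔ ∃ Y ∈ p.parts, A = gB M sig Y ∨ A = negSet (gB M sig Y) := by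
  simp only [partsB, Finset.mem_union, Finset.mem_image]
  constructor
  · rintro (⟨Y, hY, rfl⟩ | ⟨Y, hY, rfl⟩)
    exacts [⟨Y, hY, Or.inl rfl⟩, ⟨Y, hY, Or.inr rfl⟩]
  · rintro ⟨Y, hY, rfl | rfl⟩
    exacts [Or.inl ⟨Y, hY, rfl⟩, Or.inr ⟨Y, hY, rfl⟩]

@[simp] lemma posOf_gB (Y : Finset (Fin k)) : posOf (k := k) (gB M sig Y) = Y := by
  unfold gB
  split <;> simp [posOf_negSet_fs]

lemma fs_subset_gB (Y : Finset (Fin k)) : fs Y ⊆ gB M sig Y := by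
  unfold gB; split
  · exact Finset.subset_union_left
  · exact Finset.Subset.rfl

lemma gB_subset_pmSet (Y : Finset (Fin k)) : gB M sig Y ⊆ pmSet k := by
  unfold gB; split
  · exact Finset.union_subset fs_subset_pmSet (negSet_subset_pmSet fs_subset_pmSet)
  · exact fs_subset_pmSet

lemma mem_gB_pos {Y : Finset (Fin k)} {x : ℤ} (hx : 0 < x) :
    x ∈ gB M sig Y ↔ x ∈ fs Y := by
  unfold gB; split
  · simp only [Finset.mem_union, mem_negSet, or_iff_left_iff_imp]
    intro h
    exact absurd (pos_of_mem_fs h) (by omega)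
  · rfl

lemma mem_gB_neg {Y : Finset (Fin k)} {x : ℤ} (hx : x < 0) :
    x ∈ gB M sig Y ↔ Y ∈ M ∧ -x ∈ fs (sig Y) := by
  by_cases hY : Y ∈ M
  · rw [gB, if_pos hY]
    simp only [Finset.mem_union, mem_negSet, hY, true_and, neg_neg]
    constructor
    · rintro (h | h)
      · exact absurd (pos_of_mem_fs h) (by omega)
      · exact h
    · exact Or.inr
  · rw [gB, if_neg hY]
    simp only [hY, false_and, iff_false]
    intro h
    exact absurd (pos_of_mem_fs h) (by omega)

include hsq hfix in
lemma negSet_gB {Y : Finset (Fin k)} (hY : Y ∈ M) :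
    negSet (gB M sig Y) = gB M sig (sig Y) := by
  have hsY : sig Y ∈ M := sig_mem _ _ hsq hfix hY
  rw [gB, gB, if_pos hY, if_pos hsY, sig_sig _ hsq, negSet_union, negSet_negSet,
    Finset.union_comm]

include hM hsq hfix in
lemma gB_inj {Y Y' : Finset (Fin k)} (hY : Y ∈ p.parts) (hY' : Y' ∈ p.parts) {z : ℤ}
    (hz : z ∈ gB M sig Y) (hz' : z ∈ gB M sig Y') : Y = Y' := by
  have hzpm : z ∈ pmSet k := gB_subset_pmSet M sig Y hz
  have hz0 : z ≠ 0 := (mem_pmSet.mp hzpm).1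
  rcases lt_or_gt_of_ne hz0 with hneg | hpos
  · rw [mem_gB_neg M sig hneg] at hz hz'
    obtain ⟨hYM, hz⟩ := hz
    obtain ⟨hYM', hz'⟩ := hz'
    obtain ⟨i, hi⟩ := exists_toZ (neg_mem_pmSet hzpm) (by omega)
    rw [← hi, toZ_mem_fs] at hz hz'
    have h1 : sig Y ∈ p.parts := hM (sig_mem _ _ hsq hfix hYM)
    have h2 : sig Y' ∈ p.parts := hM (sig_mem _ _ hsq hfix hYM')
    exact sig.injective (p.eq_of_mem_parts h1 h2 hz hz')
  · rw [mem_gB_pos M sig hpos] at hz hz'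
    obtain ⟨i, hi⟩ := exists_toZ hzpm hpos
    rw [← hi, toZ_mem_fs] at hz hz'
    exact p.eq_of_mem_parts hY hY' hz hz'

include hM hsq hfix in
lemma gB_eq_negSet_gB {Y Y' : Finset (Fin k)} (hY : Y ∈ p.parts) (hY' : Y' ∈ p.parts) {x : ℤ}
    (hx : x ∈ gB M sig Y) (hx' : x ∈ negSet (gB M sig Y')) :
    gB M sig Y = negSet (gB M sig Y') := by
  rw [mem_negSet] at hx'
  have hxpm : x ∈ pmSet k := gB_subset_pmSet M sig Y hx
  have hx0 : x ≠ 0 := (mem_pmSet.mp hxpm).1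
  rcases lt_or_gt_of_ne hx0 with hneg | hpos
  · -- x < 0 : Y ∈ M, -x ∈ fs (sig Y); also -x ∈ gB Y' with -x > 0 so -x ∈ fs Y'
    rw [mem_gB_neg M sig hneg] at hx
    obtain ⟨hYM, hxs⟩ := hx
    rw [mem_gB_pos M sig (by omega)] at hx'
    have h1 : sig Y ∈ p.parts := hM (sig_mem _ _ hsq hfix hYM)
    have hYeq : Y' = sig Y :=
      gB_inj p M sig hM hsq hfix hY' h1 (fs_subset_gB M sig _ hx') (fs_subset_gB M sig _ hxs)
    rw [hYeq, ← negSet_gB _ _ hsq hfix hYM, negSet_negSet]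
  · -- x > 0 : x ∈ fs Y ; -x < 0 in gB Y' : Y' ∈ M, x ∈ fs (sig Y')
    rw [mem_gB_pos M sig hpos] at hx
    rw [mem_gB_neg M sig (by omega)] at hx'
    obtain ⟨hYM', hxs⟩ := hx'
    rw [neg_neg] at hxs
    have h1 : sig Y' ∈ p.parts := hM (sig_mem _ _ hsq hfix hYM')
    have hYeq : Y = sig Y' :=
      gB_inj p M sig hM hsq hfix hY h1 (fs_subset_gB M sig _ hx) (fs_subset_gB M sig _ hxs)
    rw [hYeq, negSet_gB _ _ hsq hfix hYM']

include hM hsq hfix in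
lemma partsB_eq_of_mem {A B : Finset ℤ} (hA : A ∈ partsB p M sig) (hB : B ∈ partsB p M sig)
    {x : ℤ} (hxA : x ∈ A) (hxB : x ∈ B) : A = B := by
  rw [mem_partsB] at hA hB
  obtain ⟨Y, hY, rfl | rfl⟩ := hA <;> obtain ⟨Y', hY', rfl | rfl⟩ := hB
  · rw [gB_inj p M sig hM hsq hfix hY hY' hxA hxB]
  · exact gB_eq_negSet_gB p M sig hM hsq hfix hY hY' hxA hxB
  · exact (gB_eq_negSet_gB p M sig hM hsq hfix hY' hY hxB hxA).symm
  · rw [mem_negSet] at hxA hxB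
    rw [gB_inj p M sig hM hsq hfix hY hY' hxA hxB]

lemma partsB_sup : (partsB p M sig).sup id = pmSet k := by
  apply Finset.Subset.antisymm
  · intro x hx
    rw [Finset.mem_sup] at hx
    obtain ⟨A, hA, hx⟩ := hx
    rw [mem_partsB] at hA
    obtain ⟨Y, hY, rfl | rfl⟩ := hA
    · exact gB_subset_pmSet M sig Y hx
    · exact negSet_subset_pmSet (gB_subset_pmSet M sig Y) hx
  · intro x hx
    have hx0 : x ≠ 0 := (mem_pmSet.mp hx).1
    have main : ∀ z : ℤ, z ∈ pmSet k → 0 < z → ∃ Y ∈ p.parts, z ∈ gB M sig Y := by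
      intro z hz hzpos
      obtain ⟨i, rfl⟩ := exists_toZ hz hzpos
      have : i ∈ p.parts.sup id := by rw [p.sup_parts]; exact Finset.mem_univ i
      rw [Finset.mem_sup] at this
      obtain ⟨Y, hY, hiY⟩ := this
      exact ⟨Y, hY, fs_subset_gB M sig Y (by simpa using hiY)⟩
    rw [Finset.mem_sup]
    rcases lt_or_gt_of_ne hx0 with hneg | hpos
    · obtain ⟨Y, hY, hzY⟩ := main (-x) (neg_mem_pmSet hx) (by omega)
      refine ⟨negSet (gB M sig Y), ?_, by simpa using hzY⟩
      rw [mem_partsB]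
      exact ⟨Y, hY, Or.inr rfl⟩
    · obtain ⟨Y, hY, hzY⟩ := main x hx hpos
      refine ⟨gB M sig Y, ?_, hzY⟩
      rw [mem_partsB]
      exact ⟨Y, hY, Or.inl rfl⟩

lemma partsB_nonempty {A : Finset ℤ} (hA : A ∈ partsB p M sig) : A.Nonempty := by
  rw [mem_partsB] at hA
  obtain ⟨Y, hY, rfl | rfl⟩ := hA
  · exact (fs_nonempty (p.nonempty_of_mem_parts hY)).mono (fs_subset_gB M sig Y)
  · exact negSet_nonempty ((fs_nonempty (p.nonempty_of_mem_parts hY)).mono (fs_subset_gB M sig Y))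

/-- The reconstructed symmetric partition. -/
def PB : Finpartition (pmSet k) where
  parts := partsB p M sig
  supIndep := by
    rw [Finset.supIndep_iff_pairwiseDisjoint]
    intro A hA B hB hne
    simp only [Function.onFun, id_eq]
    rw [Finset.disjoint_left]
    intro x hxA hxB
    exact hne (partsB_eq_of_mem p M sig hM hsq hfix hA hB hxA hxB)
  sup_parts := partsB_sup p M sig
  bot_notMem := by
    intro h
    exact absurd (partsB_nonempty p M sig h) (by simp)

@[simp] lemma PB_parts : (PB p M sig hM hsq hfix).parts = partsB p M sig := rfl

lemma PB_symm {A : Finset ℤ} (hA : A ∈ partsB p M sig) : negSet A ∈ partsB p M sig := by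
  rw [mem_partsB] at hA ⊢
  obtain ⟨Y, hY, rfl | rfl⟩ := hA
  · exact ⟨Y, hY, Or.inr rfl⟩
  · exact ⟨Y, hY, Or.inl (by rw [negSet_negSet])⟩

include hsq hfix in
lemma posOf_negSet_gB (Y : Finset (Fin k)) :
    posOf (k := k) (negSet (gB M sig Y)) = if Y ∈ M then sig Y else ∅ := by
  by_cases hY : Y ∈ M
  · rw [if_pos hY, negSet_gB _ _ hsq hfix hY, posOf_gB]
  · rw [if_neg hY, gB, if_neg hY, posOf_negSet_fs]

end Backward

/-! ### Round trip: G ∘ F = id -/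

section RoundTrip1

variable (P : Finpartition (pmSet k)) (hP : ∀ X ∈ P.parts, negSet X ∈ P.parts)

lemma no_neg_of_not_marked {X : Finset ℤ} (hX : X ∈ P.parts)
    (hpos : (posOf (k := k) X).Nonempty) (hm : posOf (k := k) X ∉ markedF P) :
    ∀ z ∈ X, 0 < z := by
  intro z hz
  have hzpm := P.le hX hz
  have hz0 : z ≠ 0 := (mem_pmSet.mp hzpm).1
  rcases lt_or_gt_of_ne hz0 with hneg | hpos'
  · exfalso
    obtain ⟨i, hi⟩ := exists_toZ (neg_mem_pmSet hzpm) (by omega)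
    refine hm ((mem_markedF P).mpr ⟨X, hX, rfl, hpos, ⟨i, ?_⟩⟩)
    rw [mem_posOf, mem_negSet, hi, neg_neg]
    exact hz
  · exact hpos'

include hP in
lemma gB_posOf {X : Finset ℤ} (hX : X ∈ P.parts) (hpos : (posOf (k := k) X).Nonempty) :
    gB (markedF P) (sigPermF P hP) (posOf X) = X := by
  have hsub : X ⊆ pmSet k := P.le hX
  by_cases hm : posOf (k := k) X ∈ markedF P
  · -- marked case
    have hQ : QF P (posOf X) X := by
      obtain ⟨X'', hX'', hpos'', hne'', hneg''⟩ := (mem_markedF P).mp hm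
      have : X'' = X := block_unique P hX'' hX (by rw [hpos'']) (hpos'' ▸ hne'')
      exact ⟨hX, rfl, hne'', this ▸ hneg''⟩
    have hsig : sigPermF P hP (posOf X) = posOf (negSet X) := by
      rw [sigPermF_apply, sigF_eq P hQ]
    rw [gB, if_pos hm, hsig]
    apply Finset.Subset.antisymm
    · intro z hz
      rcases Finset.mem_union.mp hz with h | h
      · exact fs_posOf_subset h
      · rw [mem_negSet] at h
        have := fs_posOf_subset h
        rw [mem_negSet, neg_neg] at this
        exact this
    · intro z hz
      have hz0 : z ≠ 0 := (mem_pmSet.mp (hsub hz)).1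
      rcases lt_or_gt_of_ne hz0 with hneg | hpos'
      · refine Finset.mem_union_right _ ?_
        rw [mem_negSet]
        exact mem_fs_posOf (negSet_subset_pmSet hsub) (by rwa [mem_negSet, neg_neg]) (by omega)
      · exact Finset.mem_union_left _ (mem_fs_posOf hsub hz hpos')
  · -- unmarked case: X is all positive
    rw [gB, if_neg hm]
    apply Finset.Subset.antisymm
    · exact fs_posOf_subset
    · intro z hz
      exact mem_fs_posOf hsub hz (no_neg_of_not_marked P hX hpos hm z hz)

include hP in
lemma partsB_roundtrip :
    partsB (pF P) (markedF P) (sigPermF P hP) = P.parts := by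
  apply Finset.Subset.antisymm
  · intro A hA
    rw [mem_partsB] at hA
    obtain ⟨Y, hY, rfl | rfl⟩ := hA
    all_goals {
      rw [pF_parts, mem_partsF] at hY
      obtain ⟨hY0, X, hX, rfl⟩ := hY
      rw [gB_posOf P hP hX (Finset.nonempty_iff_ne_empty.mpr hY0)]
      first
      | exact hX
      | exact hP X hX }
  · intro X hX
    rw [mem_partsB]
    by_cases hpos : (posOf (k := k) X).Nonempty
    · refine ⟨posOf X, ?_, Or.inl (gB_posOf P hP hX hpos).symm⟩
      rw [pF_parts, mem_partsF]
      exact ⟨Finset.nonempty_iff_ne_empty.mp hpos, X, hX, rfl⟩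
    · -- X is all negative
      have hXne : X.Nonempty := P.nonempty_of_mem_parts hX
      have hnX : negSet X ∈ P.parts := hP X hX
      have hnpos : (posOf (k := k) (negSet X)).Nonempty := by
        obtain ⟨z, hz⟩ := hXne
        have hzpm := P.le hX hz
        have hz0 : z ≠ 0 := (mem_pmSet.mp hzpm).1
        have hzneg : z < 0 := by
          rcases lt_or_gt_of_ne hz0 with h | h
          · exact h
          · exfalso
            obtain ⟨i, hi⟩ := exists_toZ hzpm h
            exact hpos ⟨i, by rw [mem_posOf, hi]; exact hz⟩
        obtain ⟨i, hi⟩ := exists_toZ (neg_mem_pmSet hzpm) (by omega)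
        exact ⟨i, by rw [mem_posOf, hi, mem_negSet, neg_neg]; exact hz⟩
      refine ⟨posOf (negSet X), ?_, Or.inr ?_⟩
      · rw [pF_parts, mem_partsF]
        exact ⟨Finset.nonempty_iff_ne_empty.mp hnpos, negSet X, hnX, rfl⟩
      · rw [gB_posOf P hP hnX hnpos, negSet_negSet]

end RoundTrip1

/-! ### Round trip: F ∘ G = id -/

section RoundTrip2

variable (p : Finpartition (Finset.univ : Finset (Fin k))) (M : Finset (Finset (Fin k)))
  (sig : Equiv.Perm (Finset (Fin k)))
  (hM : M ⊆ p.parts) (hsq : sig * sig = 1) (hfix : ∀ Y ∉ M, sig Y = Y)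

include hM hsq hfix

lemma partsF_roundtrip : partsF (PB p M sig hM hsq hfix) = p.parts := by
  ext Y
  rw [mem_partsF, PB_parts]
  constructor
  · rintro ⟨hY0, X, hX, rfl⟩
    rw [mem_partsB] at hX
    obtain ⟨Y', hY', rfl | rfl⟩ := hX
    · rwa [posOf_gB]
    · rw [posOf_negSet_gB M sig hsq hfix] at hY0 ⊢
      by_cases hY'M : Y' ∈ M
      · rw [if_pos hY'M]
        exact hM (sig_mem _ _ hsq hfix hY'M)
      · rw [if_neg hY'M] at hY0; exact absurd rfl hY0
  · intro hY
    refine ⟨Finset.nonempty_iff_ne_empty.mp (p.nonempty_of_mem_parts hY), gB M sig Y, ?_, posOf_gB M sig Y⟩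
    rw [mem_partsB]
    exact ⟨Y, hY, Or.inl rfl⟩

lemma markedF_roundtrip : markedF (PB p M sig hM hsq hfix) = M := by
  ext Y
  rw [mem_markedF, PB_parts]
  constructor
  · rintro ⟨X, hX, hpos, hne, hneg⟩
    rw [mem_partsB] at hX
    obtain ⟨Y', hY', rfl | rfl⟩ := hX
    · rw [posOf_gB] at hpos
      subst hpos
      rw [posOf_negSet_gB M sig hsq hfix] at hneg
      by_cases hY'M : Y' ∈ M
      · exact hY'M
      · rw [if_neg hY'M] at hneg; simp at hneg
    · rw [negSet_negSet, posOf_gB] at hneg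
      rw [posOf_negSet_gB M sig hsq hfix] at hpos
      by_cases hY'M : Y' ∈ M
      · rw [if_pos hY'M] at hpos
        subst hpos
        exact sig_mem _ _ hsq hfix hY'M
      · rw [if_neg hY'M] at hpos
        subst hpos
        simp at hne
  · intro hY
    have hYp : Y ∈ p.parts := hM hY
    refine ⟨gB M sig Y, ?_, posOf_gB M sig Y, p.nonempty_of_mem_parts hYp, ?_⟩
    · rw [mem_partsB]; exact ⟨Y, hYp, Or.inl rfl⟩
    · rw [posOf_negSet_gB M sig hsq hfix, if_pos hY]
      exact p.nonempty_of_mem_parts (hM (sig_mem _ _ hsq hfix hY))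

lemma sigF_roundtrip (Y : Finset (Fin k)) : sigF (PB p M sig hM hsq hfix) Y = sig Y := by
  by_cases hY : Y ∈ M
  · have hQ : QF (PB p M sig hM hsq hfix) Y (gB M sig Y) := by
      refine ⟨?_, posOf_gB M sig Y, p.nonempty_of_mem_parts (hM hY), ?_⟩
      · rw [PB_parts, mem_partsB]; exact ⟨Y, hM hY, Or.inl rfl⟩
      · rw [posOf_negSet_gB M sig hsq hfix, if_pos hY]
        exact p.nonempty_of_mem_parts (hM (sig_mem _ _ hsq hfix hY))
    rw [sigF_eq _ hQ, posOf_negSet_gB M sig hsq hfix, if_pos hY]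
  · rw [sigF_eq_of_not, hfix Y hY]
    rintro ⟨X, hX, hpos, hne, hneg⟩
    rw [PB_parts, mem_partsB] at hX
    obtain ⟨Y', hY', rfl | rfl⟩ := hX
    · rw [posOf_gB] at hpos
      subst hpos
      rw [posOf_negSet_gB M sig hsq hfix] at hneg
      by_cases hY'M : Y' ∈ M
      · exact hY hY'M
      · rw [if_neg hY'M] at hneg; simp at hneg
    · rw [posOf_negSet_gB M sig hsq hfix] at hpos
      by_cases hY'M : Y' ∈ M
      · rw [if_pos hY'M] at hpos
        subst hpos
        exact hY (sig_mem _ _ hsq hfix hY'M)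
      · rw [if_neg hY'M] at hpos
        subst hpos
        simp at hne

end RoundTrip2

/-! ### The main equivalence and counting -/

def SymPart (k : ℕ) :=
  {P : Finpartition (pmSet k) // ∀ X ∈ P.parts, X.image (fun x => -x) ∈ P.parts}

def MT (k : ℕ) :=
  {q : (Finpartition (Finset.univ : Finset (Fin k)) × Finset (Finset (Fin k)))
      × Equiv.Perm (Finset (Fin k)) //
    q.1.2 ⊆ q.1.1.parts ∧ q.2 * q.2 = 1 ∧ ∀ Y ∉ q.1.2, q.2 Y = Y}

noncomputable def mainEquiv : SymPart k ≃ MT k where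
  toFun := fun ⟨P, hP⟩ =>
    ⟨((pF P, markedF P), sigPermF P hP),
      markedF_subset P, sigPermF_sq P hP, fun _ hY => sigPermF_fixes P hP hY⟩
  invFun := fun ⟨((p, M), sig), hM, hsq, hfix⟩ =>
    ⟨PB p M sig hM hsq hfix, fun _ hX => PB_symm p M sig hX⟩
  left_inv := by
    rintro ⟨P, hP⟩
    exact Subtype.ext (Finpartition.ext (partsB_roundtrip P hP))
  right_inv := by
    rintro ⟨⟨⟨p, M⟩, sig⟩, hM, hsq, hfix⟩
    refine Subtype.ext ?_
    refine Prod.ext (Prod.ext ?_ ?_) ?_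
    · exact Finpartition.ext (partsF_roundtrip p M sig hM hsq hfix)
    · exact markedF_roundtrip p M sig hM hsq hfix
    · exact Equiv.ext fun Y => sigF_roundtrip p M sig hM hsq hfix Y

open Classical in
noncomputable def fibEquiv (M : Finset (Finset (Fin k))) :
    {σ : Equiv.Perm (Finset (Fin k)) // σ * σ = 1 ∧ ∀ Y ∉ M, σ Y = Y} ≃
      {τ : Equiv.Perm {Y // Y ∈ M} // τ * τ = 1} where
  toFun := fun ⟨σ, hsq, hfix⟩ =>
    ⟨σ.subtypePerm (fun Y => by
      constructor
      · intro h
        by_contra hc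
        rw [hfix Y hc] at h
        exact hc h
      · intro h; exact sig_mem M σ hsq hfix h), by
      refine Equiv.ext fun x => ?_
      simp only [Equiv.Perm.mul_apply, Equiv.Perm.subtypePerm_apply, Equiv.Perm.one_apply]
      apply Subtype.ext
      exact sig_sig σ hsq x⟩
  invFun := fun ⟨τ, hsq⟩ =>
    ⟨Equiv.Perm.ofSubtype τ, by rw [← map_mul, hsq, map_one],
      fun Y hY => Equiv.Perm.ofSubtype_apply_of_not_mem τ hY⟩
  left_inv := by
    rintro ⟨σ, hsq, hfix⟩
    refine Subtype.ext (Equiv.ext fun Y => ?_)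
    by_cases hY : Y ∈ M
    · rw [Equiv.Perm.ofSubtype_apply_of_mem _ hY]
      rfl
    · rw [Equiv.Perm.ofSubtype_apply_of_not_mem _ hY, hfix Y hY]
  right_inv := by
    rintro ⟨τ, hsq⟩
    refine Subtype.ext (Equiv.ext fun Y => ?_)
    refine Subtype.ext ?_
    simp only [Equiv.Perm.subtypePerm_apply]
    rw [Equiv.Perm.ofSubtype_apply_of_mem _ Y.2]

noncomputable def fibEquiv2 (M : Finset (Finset (Fin k))) :
    {τ : Equiv.Perm {Y // Y ∈ M} // τ * τ = 1} ≃ {τ : Equiv.Perm (Fin M.card) // τ * τ = 1} := by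
  have e := M.equivFin
  have hmul : ∀ σ τ : Equiv.Perm {Y // Y ∈ M},
      e.permCongr (σ * τ) = e.permCongr σ * e.permCongr τ := by
    intro σ τ
    refine Equiv.ext fun x => ?_
    simp [Equiv.permCongr_apply, Equiv.Perm.mul_apply]
  have hone : e.permCongr 1 = 1 := by
    refine Equiv.ext fun x => ?_; simp [Equiv.permCongr_apply]
  exact Equiv.subtypeEquiv e.permCongr (fun σ => by
    constructor
    · intro h; rw [← hmul, h, hone]
    · intro h
      apply e.permCongr.injective
      rw [hmul, h, hone])

lemma card_fib (M : Finset (Finset (Fin k))) :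
    Nat.card {σ : Equiv.Perm (Finset (Fin k)) // σ * σ = 1 ∧ ∀ Y ∉ M, σ Y = Y} =
      involutions M.card := by
  rw [Nat.card_congr ((fibEquiv M).trans (fibEquiv2 M))]
  rfl

def BB (k : ℕ) :=
  {pm : Finpartition (Finset.univ : Finset (Fin k)) × Finset (Finset (Fin k)) //
    pm.2 ⊆ pm.1.parts}

noncomputable def sigmaEquiv :
    MT k ≃ Σ pm : BB k,
      {σ : Equiv.Perm (Finset (Fin k)) // σ * σ = 1 ∧ ∀ Y ∉ pm.1.2, σ Y = Y} where
  toFun := fun ⟨⟨pm, σ⟩, h1, h2, h3⟩ => ⟨⟨pm, h1⟩, σ, h2, h3⟩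
  invFun := fun ⟨⟨pm, h1⟩, σ, h2, h3⟩ => ⟨⟨pm, σ⟩, h1, h2, h3⟩
  left_inv := fun ⟨⟨pm, σ⟩, h1, h2, h3⟩ => rfl
  right_inv := fun ⟨⟨pm, h1⟩, σ, h2, h3⟩ => rfl

lemma card_MT (k : ℕ) :
    Nat.card (MT k) = ∑ j ∈ Finset.range (k + 1), markedPartitions k j * involutions j := by
  classical
  rw [Nat.card_congr (sigmaEquiv (k := k))]
  haveI : Fintype (BB k) := by unfold BB; infer_instance
  rw [Nat.card_eq_fintype_card, Fintype.card_sigma]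
  have h1 : ∀ pm : BB k,
      Fintype.card {σ : Equiv.Perm (Finset (Fin k)) // σ * σ = 1 ∧ ∀ Y ∉ pm.1.2, σ Y = Y} =
        involutions pm.1.2.card := by
    intro pm
    rw [Fintype.card_eq_nat_card, card_fib]
  simp_rw [h1]
  rw [← Finset.sum_fiberwise_of_maps_to (g := fun pm : BB k => pm.1.2.card)
      (t := Finset.range (k + 1)) ?mapsto (fun pm => involutions pm.1.2.card)]
  case mapsto =>
    intro pm _
    rw [Finset.mem_range, Nat.lt_succ_iff]
    calc pm.1.2.card ≤ pm.1.1.parts.card := Finset.card_le_card pm.2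
      _ ≤ (Finset.univ : Finset (Fin k)).card := pm.1.1.card_parts_le_card
      _ = k := by simp
  refine Finset.sum_congr rfl fun j hj => ?_
  rw [Finset.sum_const_nat (m := involutions j)
    (fun pm h => by rw [(Finset.mem_filter.mp h).2])]
  congr 1
  rw [← Fintype.card_subtype, markedPartitions, Fintype.card_eq_nat_card]
  exact Nat.card_congr (Equiv.subtypeSubtypeEquivSubtypeInter
    (fun pm : Finpartition (Finset.univ : Finset (Fin k)) × Finset (Finset (Fin k)) =>
      pm.2 ⊆ pm.1.parts) (fun pm => pm.2.card = j))

end Stmt4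

theorem stmt4 (k : ℕ) (hk : 1 ≤ k) :
    Nat.card {P : Finpartition (pmSet k) //
      ∀ X ∈ P.parts, X.image (fun x => -x) ∈ P.parts} =
    ∑ j ∈ Finset.range (k + 1), markedPartitions k j * involutions j :=
  (Nat.card_congr (Stmt4.mainEquiv (k := k))).trans (Stmt4.card_MT k)
end

section
/- For every integer k ≥ 0, the number of partly ordered set partitions of {1,...,k} equals u_k = ∑_{j=0}^{k} j! · B(k,j), where B(k,j) = ∑_r C(r,j) S(k,r). -/
open Finset Nat

lemma stirling_eq_zero : ∀ {n j : ℕ}, n < j → stirling n j = 0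
  | 0, _ + 1, _ => rfl
  | n + 1, j + 1, h => by
    have h' : n < j := Nat.lt_of_succ_lt_succ h
    show (j + 1) * stirling n (j + 1) + stirling n j = 0
    rw [stirling_eq_zero h', stirling_eq_zero (h'.trans (Nat.lt_succ_self j))]
    simp

def MSet (k : ℕ) : Finset (Fin k → Fin k) :=
  univ.filter fun f => (∀ i, f i ≤ i) ∧ ∀ i, f (f i) = f i

lemma mem_MSet {k : ℕ} {f : Fin k → Fin k} :
    f ∈ MSet k ↔ (∀ i, f i ≤ i) ∧ ∀ i, f (f i) = f i := by
  simp [MSet]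

def fixc {k : ℕ} (f : Fin k → Fin k) : ℕ := (univ.filter fun i => f i = i).card

def res {k : ℕ} (f : Fin (k + 1) → Fin (k + 1)) : Fin k → Fin k :=
  fun i => ⟨min (f i.castSucc).1 i.1, lt_of_le_of_lt (min_le_right _ _) i.isLt⟩

def Phi {k : ℕ} (g : Fin k → Fin k) (v : Fin (k + 1)) : Fin (k + 1) → Fin (k + 1) :=
  fun i => if h : i = Fin.last k then v else Fin.castSucc (g (i.castPred h))

lemma Phi_last {k : ℕ} (g : Fin k → Fin k) (v : Fin (k + 1)) : Phi g v (Fin.last k) = v :=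
  dif_pos rfl

lemma Phi_castSucc {k : ℕ} (g : Fin k → Fin k) (v : Fin (k + 1)) (i : Fin k) :
    Phi g v i.castSucc = Fin.castSucc (g i) := by
  rw [Phi, dif_neg (Fin.castSucc_lt_last i).ne]
  rw [Fin.castPred_castSucc]

lemma res_val {k : ℕ} {f : Fin (k + 1) → Fin (k + 1)} (hle : ∀ i, f i ≤ i) (i : Fin k) :
    ((res f i : Fin k) : ℕ) = ((f i.castSucc : Fin (k+1)) : ℕ) := by
  show min (f i.castSucc).1 i.1 = _
  exact min_eq_left (le_trans (hle i.castSucc) (by simp [Fin.le_def]))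

lemma castSucc_res {k : ℕ} {f : Fin (k + 1) → Fin (k + 1)} (hle : ∀ i, f i ≤ i) (i : Fin k) :
    (res f i).castSucc = f i.castSucc := by
  apply Fin.ext
  rw [Fin.coe_castSucc, res_val hle]

lemma res_mem {k : ℕ} {f : Fin (k + 1) → Fin (k + 1)} (hf : f ∈ MSet (k + 1)) :
    res f ∈ MSet k := by
  obtain ⟨hle, hid⟩ := mem_MSet.mp hf
  rw [mem_MSet]
  constructor
  · intro i
    rw [Fin.le_def]
    exact min_le_right _ _
  · intro i
    apply Fin.ext
    rw [res_val hle, castSucc_res hle, hid, res_val hle]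

lemma Phi_res {k : ℕ} {f : Fin (k + 1) → Fin (k + 1)} (hf : f ∈ MSet (k + 1)) :
    Phi (res f) (f (Fin.last k)) = f := by
  obtain ⟨hle, _⟩ := mem_MSet.mp hf
  funext i
  rcases Fin.eq_castSucc_or_eq_last i with ⟨j, rfl⟩ | rfl
  · rw [Phi_castSucc, castSucc_res hle]
  · rw [Phi_last]

lemma res_Phi {k : ℕ} {g : Fin k → Fin k} (hg : g ∈ MSet k) (v : Fin (k + 1)) :
    res (Phi g v) = g := by
  obtain ⟨hle, _⟩ := mem_MSet.mp hg
  funext i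
  apply Fin.ext
  show min ((Phi g v) i.castSucc).1 i.1 = (g i).1
  rw [Phi_castSucc, Fin.coe_castSucc]
  exact min_eq_left (hle i)

def allowed {k : ℕ} (g : Fin k → Fin k) : Finset (Fin (k + 1)) :=
  insert (Fin.last k) ((univ.filter fun i => g i = i).image Fin.castSucc)

lemma mem_allowed {k : ℕ} {g : Fin k → Fin k} {v : Fin (k + 1)} :
    v ∈ allowed g ↔ v = Fin.last k ∨ ∃ j, g j = j ∧ v = j.castSucc := by
  simp only [allowed, mem_insert, mem_image, mem_filter, mem_univ, true_and]
  constructor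
  · rintro (h | ⟨j, hj, rfl⟩)
    · exact Or.inl h
    · exact Or.inr ⟨j, hj, rfl⟩
  · rintro (h | ⟨j, hj, rfl⟩)
    · exact Or.inl h
    · exact Or.inr ⟨j, hj, rfl⟩

lemma Phi_mem {k : ℕ} {g : Fin k → Fin k} (hg : g ∈ MSet k) {v : Fin (k + 1)}
    (hv : v ∈ allowed g) : Phi g v ∈ MSet (k + 1) := by
  obtain ⟨hle, hid⟩ := mem_MSet.mp hg
  rw [mem_MSet]
  constructor
  · intro i
    rcases Fin.eq_castSucc_or_eq_last i with ⟨j, rfl⟩ | rfl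
    · rw [Phi_castSucc]
      exact Fin.castSucc_le_castSucc_iff.mpr (hle j)
    · rw [Phi_last]
      exact Fin.le_last v
  · intro i
    rcases Fin.eq_castSucc_or_eq_last i with ⟨j, rfl⟩ | rfl
    · rw [Phi_castSucc, Phi_castSucc, hid]
    · rw [Phi_last]
      rcases mem_allowed.mp hv with rfl | ⟨j, hj, rfl⟩
      · rw [Phi_last]
      · rw [Phi_castSucc, hj]

lemma last_mem_allowed {k : ℕ} {f : Fin (k + 1) → Fin (k + 1)} (hf : f ∈ MSet (k + 1)) :
    f (Fin.last k) ∈ allowed (res f) := by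
  obtain ⟨hle, hid⟩ := mem_MSet.mp hf
  rw [mem_allowed]
  by_cases h : f (Fin.last k) = Fin.last k
  · exact Or.inl h
  · refine Or.inr ⟨(f (Fin.last k)).castPred h, ?_, (Fin.castSucc_castPred _ h).symm⟩
    apply Fin.ext
    have hcast : ((f (Fin.last k)).castPred h).castSucc = f (Fin.last k) :=
      Fin.castSucc_castPred _ h
    rw [res_val hle, hcast, hid]
    rfl

lemma fixc_Phi {k : ℕ} {g : Fin k → Fin k} (v : Fin (k + 1)) :
    fixc (Phi g v) = fixc g + if v = Fin.last k then 1 else 0 := by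
  unfold fixc
  rw [Finset.card_filter, Finset.card_filter, Fin.sum_univ_castSucc]
  congr 1
  · apply Finset.sum_congr rfl
    intro i _
    rw [Phi_castSucc]
    simp [Fin.castSucc_inj]
  · rw [Phi_last]

lemma stirling_succ_succ (n j : ℕ) :
    stirling (n + 1) (j + 1) = (j + 1) * stirling n (j + 1) + stirling n j := rfl

theorem key_sum (k : ℕ) : ∀ w : ℕ → ℕ,
    ∑ f ∈ MSet k, w (fixc f) = ∑ r ∈ Finset.range (k + 1), stirling k r * w r := by
  induction k with
  | zero =>
    intro w
    rw [Finset.sum_range_one]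
    show _ = 1 * w 0
    rw [one_mul]
    have h0 : MSet 0 = {fun i => i} := by
      apply Finset.eq_singleton_iff_unique_mem.mpr
      constructor
      · rw [mem_MSet]
        exact ⟨fun i => i.elim0, fun i => i.elim0⟩
      · intro f _
        funext i
        exact i.elim0
    rw [h0, Finset.sum_singleton]
    congr 1
  | succ k ih =>
    intro w
    have step1 : ∑ f ∈ MSet (k + 1), w (fixc f)
        = ∑ g ∈ MSet k, ∑ f ∈ (MSet (k + 1)).filter (fun f => res f = g), w (fixc f) :=
      (Finset.sum_fiberwise_of_maps_to (fun f hf => res_mem hf) _).symm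
    have step2 : ∀ g ∈ MSet k,
        ∑ f ∈ (MSet (k + 1)).filter (fun f => res f = g), w (fixc f)
          = w (fixc g + 1) + fixc g * w (fixc g) := by
      intro g hg
      have e1 : ∑ f ∈ (MSet (k + 1)).filter (fun f => res f = g), w (fixc f)
          = ∑ v ∈ allowed g, w (fixc (Phi g v)) := by
        apply Finset.sum_nbij' (i := fun f => f (Fin.last k)) (j := fun v => Phi g v)
        · intro f hf
          rw [mem_filter] at hf
          have := last_mem_allowed hf.1
          rwa [hf.2] at this
        · intro v hv
          rw [mem_filter]
          exact ⟨Phi_mem hg hv, res_Phi hg v⟩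
        · intro f hf
          rw [mem_filter] at hf
          rw [← hf.2]
          exact Phi_res hf.1
        · intro v _
          exact Phi_last g v
        · intro f hf
          rw [mem_filter] at hf
          congr 1
          rw [← hf.2, Phi_res hf.1]
      rw [e1]
      have hnotmem : Fin.last k ∉ (univ.filter fun i => g i = i).image Fin.castSucc := by
        simp only [mem_image]
        rintro ⟨j, _, hj⟩
        exact (Fin.castSucc_lt_last j).ne hj
      rw [allowed, Finset.sum_insert hnotmem,
        Finset.sum_image (fun x _ y _ h => Fin.castSucc_injective _ h)]
      rw [fixc_Phi, if_pos rfl]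
      have hconst : ∀ i ∈ univ.filter (fun i => g i = i),
          w (fixc (Phi g (Fin.castSucc i))) = w (fixc g) := by
        intro i _
        rw [fixc_Phi, if_neg (Fin.castSucc_lt_last i).ne, add_zero]
      rw [Finset.sum_congr rfl hconst, Finset.sum_const, smul_eq_mul]
      rfl
    rw [step1, Finset.sum_congr rfl step2]
    have IH := ih (fun n => w (n + 1) + n * w n)
    rw [IH]
    -- arithmetic identity
    rw [Finset.sum_range_succ' (fun r => stirling (k + 1) r * w r) (k + 1)]
    have hst0 : stirling (k + 1) 0 * w 0 = 0 := by
      show 0 * w 0 = 0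
      rw [zero_mul]
    rw [hst0, add_zero]
    have expand : ∀ j ∈ Finset.range (k + 1),
        stirling (k + 1) (j + 1) * w (j + 1)
          = stirling k (j + 1) * ((j + 1) * w (j + 1)) + stirling k j * w (j + 1) := by
      intro j _
      rw [stirling_succ_succ, add_mul]
      ring
    rw [Finset.sum_congr rfl expand, Finset.sum_add_distrib]
    have lhs_expand : ∀ r ∈ Finset.range (k + 1),
        stirling k r * (w (r + 1) + r * w r)
          = stirling k r * w (r + 1) + stirling k r * (r * w r) := fun r _ => mul_add _ _ _
    rw [Finset.sum_congr rfl lhs_expand, Finset.sum_add_distrib]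
    have hB : ∑ r ∈ Finset.range (k + 1), stirling k r * (r * w r)
        = ∑ j ∈ Finset.range (k + 1), stirling k (j + 1) * ((j + 1) * w (j + 1)) := by
      set t : ℕ → ℕ := fun r => stirling k r * (r * w r) with ht
      have e2 := Finset.sum_range_succ t (k + 1)
      have e3 := Finset.sum_range_succ' t (k + 1)
      have h0 : t 0 = 0 := by simp [ht]
      have hk1 : t (k + 1) = 0 := by
        simp [ht, stirling_eq_zero (Nat.lt_succ_self k)]
      rw [hk1, add_zero] at e2
      rw [h0, add_zero] at e3
      rw [← e2, e3]
    rw [hB, add_comm]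

variable {β : Type*} [Fintype β] [DecidableEq β]

def lenFiberEquiv (j : ℕ) :
    {l : List β // l.Nodup ∧ l.length = j} ≃ (Fin j ↪ β) where
  toFun l := ((Fin.castOrderIso l.2.2.symm).toEquiv.toEmbedding).trans
    ⟨l.1.get, List.nodup_iff_injective_get.mp l.2.1⟩
  invFun e := ⟨List.ofFn e, List.nodup_ofFn.mpr e.injective, List.length_ofFn⟩
  left_inv l := by
    apply Subtype.ext
    apply List.ext_get (by simp [l.2.2])
    intro i h1 h2
    simp
  right_inv e := by
    ext i
    simp [List.get_ofFn]

def nodupListEquiv (m : ℕ) (hm : Fintype.card β ≤ m) :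
    {l : List β // l.Nodup} ≃ Σ j : Fin (m + 1), (Fin j ↪ β) :=
  ({ toFun := fun l => ⟨⟨l.1.length, Nat.lt_succ_of_le (l.2.length_le_card.trans hm)⟩,
      ⟨l.1, l.2, rfl⟩⟩
     invFun := fun e => ⟨e.2.1, e.2.2.1⟩
     left_inv := fun l => rfl
     right_inv := fun ⟨⟨j, hj⟩, ⟨l, hn, hl⟩⟩ => by
       have hl' : l.length = j := hl
       subst hl'
       rfl } :
    {l : List β // l.Nodup} ≃ Σ j : Fin (m + 1), {l : List β // l.Nodup ∧ l.length = j}).trans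
  (Equiv.sigmaCongrRight fun j => lenFiberEquiv j)

theorem card_nodupList (m : ℕ) (hm : Fintype.card β ≤ m) :
    Fintype.card {l : List β // l.Nodup} =
      ∑ j ∈ Finset.range (m + 1), j ! * (Fintype.card β).choose j := by
  rw [Fintype.card_congr (nodupListEquiv m hm), Fintype.card_sigma]
  rw [Fin.sum_univ_eq_sum_range (fun j => Fintype.card (Fin j ↪ β))]
  refine Finset.sum_congr rfl fun j _ => ?_
  rw [Fintype.card_embedding_eq, Fintype.card_fin, Nat.descFactorial_eq_factorial_mul_choose]

variable {k : ℕ}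

private lemma min'_eq_of_eq {s t : Finset (Fin k)} (h : s = t) (hs : s.Nonempty) :
    s.min' hs = t.min' (h ▸ hs) := by subst h; rfl

def toMin (P : Finpartition (univ : Finset (Fin k))) : Fin k → Fin k :=
  fun i => (P.part i).min' ⟨i, P.mem_part (mem_univ i)⟩

lemma toMin_mem_part (P : Finpartition (univ : Finset (Fin k))) (i : Fin k) :
    toMin P i ∈ P.part i := Finset.min'_mem _ _

lemma part_toMin (P : Finpartition (univ : Finset (Fin k))) (i : Fin k) :
    P.part (toMin P i) = P.part i :=
  P.part_eq_of_mem (P.part_mem.mpr (mem_univ i)) (toMin_mem_part P i)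

lemma toMin_le (P : Finpartition (univ : Finset (Fin k))) (i : Fin k) :
    toMin P i ≤ i := Finset.min'_le _ _ (P.mem_part (mem_univ i))

lemma toMin_idem (P : Finpartition (univ : Finset (Fin k))) (i : Fin k) :
    toMin P (toMin P i) = toMin P i :=
  min'_eq_of_eq (congrArg _ rfl) _ |>.trans (min'_eq_of_eq (part_toMin P i) _)

lemma toMin_eq_iff_part_eq (P : Finpartition (univ : Finset (Fin k))) (a b : Fin k) :
    toMin P a = toMin P b ↔ P.part a = P.part b := by
  constructor
  · intro h
    rw [← part_toMin P a, h, part_toMin]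
  · intro h
    exact (min'_eq_of_eq h _)

lemma part_ext (P Q : Finpartition (univ : Finset (Fin k)))
    (h : ∀ a, P.part a = Q.part a) : P = Q := by
  have key : ∀ (P Q : Finpartition (univ : Finset (Fin k))),
      (∀ a, P.part a = Q.part a) → P.parts ⊆ Q.parts := by
    intro P Q h A hA
    obtain ⟨a, ha⟩ := P.nonempty_of_mem_parts hA
    rw [← P.part_eq_of_mem hA ha, h]
    exact Q.part_mem.mpr (mem_univ a)
  ext A
  exact ⟨fun hA => key P Q h hA, fun hA => key Q P (fun a => (h a).symm) hA⟩

def ofKer (f : Fin k → Fin k) : Finpartition (univ : Finset (Fin k)) :=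
  letI : DecidableRel (Setoid.ker f).r := fun a b => decidable_of_iff (f a = f b) Iff.rfl
  Finpartition.ofSetoid (Setoid.ker f)

lemma mem_part_ofKer (f : Fin k → Fin k) (a b : Fin k) :
    b ∈ (ofKer f).part a ↔ f a = f b := by
  letI : DecidableRel (Setoid.ker f).r := fun a b => decidable_of_iff (f a = f b) Iff.rfl
  exact (Finpartition.mem_part_ofSetoid_iff_rel).trans Setoid.ker_def

def partEquiv : Finpartition (univ : Finset (Fin k)) ≃
    {f : Fin k → Fin k // (∀ i, f i ≤ i) ∧ ∀ i, f (f i) = f i} where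
  toFun P := ⟨toMin P, toMin_le P, toMin_idem P⟩
  invFun f := ofKer f.1
  left_inv P := by
    show ofKer (toMin P) = P
    apply part_ext
    intro a
    ext b
    rw [mem_part_ofKer, toMin_eq_iff_part_eq]
    constructor
    · intro h
      rw [h]
      exact P.mem_part (mem_univ b)
    · intro h
      exact (P.part_eq_of_mem (P.part_mem.mpr (mem_univ a)) h).symm
  right_inv f := by
    obtain ⟨f, hle, hidem⟩ := f
    apply Subtype.ext
    funext i
    show toMin (ofKer f) i = f i
    have hne : ((ofKer f).part i).Nonempty := ⟨i, (ofKer f).mem_part (mem_univ i)⟩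
    show ((ofKer f).part i).min' _ = f i
    apply le_antisymm
    · exact Finset.min'_le _ _ ((mem_part_ofKer f i (f i)).mpr (hidem i).symm)
    · apply Finset.le_min'
      intro b hb
      rw [mem_part_ofKer] at hb
      exact hb ▸ hle b

lemma parts_card_eq (P : Finpartition (univ : Finset (Fin k))) :
    P.parts.card = (univ.filter fun i => toMin P i = i).card := by
  rw [eq_comm]
  refine Finset.card_bij' (fun i _ => P.part i)
      (fun A hA => A.min' (P.nonempty_of_mem_parts hA))
      (fun i _ => P.part_mem.mpr (mem_univ i)) (fun A hA => ?_) (fun i hi => ?_) (fun A hA => ?_)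
  · rw [mem_filter]
    refine ⟨mem_univ _, ?_⟩
    have hne := P.nonempty_of_mem_parts hA
    have hpart : P.part (A.min' hne) = A := P.part_eq_of_mem hA (A.min'_mem hne)
    show (P.part (A.min' hne)).min' _ = A.min' hne
    exact min'_eq_of_eq hpart _
  · rw [mem_filter] at hi
    exact hi.2
  · exact P.part_eq_of_mem hA (A.min'_mem (P.nonempty_of_mem_parts hA))

def sigmaEquiv (k : ℕ) :
    {p : Finpartition (Finset.univ : Finset (Fin k)) × List (Finset (Fin k)) //
      p.2.Nodup ∧ ∀ X ∈ p.2, X ∈ p.1.parts} ≃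
    Σ P : Finpartition (Finset.univ : Finset (Fin k)),
      {l : List {A : Finset (Fin k) // A ∈ P.parts} // l.Nodup} where
  toFun x := ⟨x.1.1, ⟨x.1.2.attachWith (· ∈ x.1.1.parts) x.2.2, by
    apply List.Nodup.of_map Subtype.val
    rw [List.attachWith_map_subtype_val]
    exact x.2.1⟩⟩
  invFun y := ⟨(y.1, y.2.1.map Subtype.val),
    y.2.2.map Subtype.val_injective,
    fun X hX => by
      obtain ⟨a, _, rfl⟩ := List.mem_map.mp hX
      exact a.2⟩
  left_inv x := by
    apply Subtype.ext
    show (x.1.1, _) = x.1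
    rw [List.attachWith_map_subtype_val]
  right_inv y := by
    obtain ⟨P, l, hl⟩ := y
    refine Sigma.ext rfl (heq_of_eq (Subtype.ext ?_))
    show List.attachWith _ _ _ = l
    apply List.map_injective_iff.mpr Subtype.val_injective
    rw [List.attachWith_map_subtype_val]

/-- A partly ordered set partition of `{1,…,k}` is a set partition together with a
duplicate-free list of blocks (the marked blocks, equipped with their linear order). -/
theorem stmt5 (k : ℕ) :
    Nat.card {p : Finpartition (Finset.univ : Finset (Fin k)) × List (Finset (Fin k)) //
      p.2.Nodup ∧ ∀ X ∈ p.2, X ∈ p.1.parts} =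
    ∑ j ∈ Finset.range (k + 1),
      j ! * ∑ r ∈ Finset.range (k + 1), r.choose j * stirling k r := by
  rw [Nat.card_congr (sigmaEquiv k), Nat.card_eq_fintype_card, Fintype.card_sigma]
  have hcard : ∀ P : Finpartition (Finset.univ : Finset (Fin k)),
      Fintype.card {l : List {A : Finset (Fin k) // A ∈ P.parts} // l.Nodup}
        = ∑ j ∈ Finset.range (k + 1), j ! * (P.parts.card).choose j := by
    intro P
    have hle : Fintype.card {A : Finset (Fin k) // A ∈ P.parts} ≤ k := by
      rw [Fintype.card_coe]
      exact P.card_parts_le_card.trans (by simp)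
    rw [card_nodupList k hle, Fintype.card_coe]
  rw [Finset.sum_congr rfl (fun P _ => hcard P)]
  -- replace parts.card by fixc of the min function, then sum over MSet
  have hsum : ∑ P : Finpartition (Finset.univ : Finset (Fin k)),
      (∑ j ∈ Finset.range (k + 1), j ! * (P.parts.card).choose j)
      = ∑ f ∈ MSet k, ∑ j ∈ Finset.range (k + 1), j ! * (fixc f).choose j := by
    rw [Finset.sum_subtype (MSet k) (fun f => mem_MSet)
      (fun f => ∑ j ∈ Finset.range (k + 1), j ! * (fixc f).choose j)]
    apply Fintype.sum_equiv partEquiv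
    intro P
    rw [parts_card_eq P]
    rfl
  rw [hsum, key_sum k (fun r => ∑ j ∈ Finset.range (k + 1), j ! * r.choose j)]
  simp_rw [Finset.mul_sum]
  rw [Finset.sum_comm]
  apply Finset.sum_congr rfl
  intro j _
  apply Finset.sum_congr rfl
  intro r _
  ring
end

section
/- For all integers k₁, k₂ ≥ 1, the number of (k₁,k₂)-connecting set partitions of {1,...,k₁+k₂} equals ∑_{j≥0} j! · S(k₁,j) · S(k₂,j). -/
open Finset Nat

lemma stirling_eq_zero_of_lt : ∀ {k j : ℕ}, k < j → stirling k j = 0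
  | 0, j + 1, _ => rfl
  | n + 1, j + 1, h => by
    have h1 : n < j + 1 := by omega
    have h2 : n < j := by omega
    simp [stirling, stirling_eq_zero_of_lt h1, stirling_eq_zero_of_lt h2]

variable {α : Type*} [DecidableEq α] {a : α} {s : Finset α}

lemma part_subset {s : Finset α} (P : Finpartition s) {t : Finset α} (ht : t ∈ P.parts) :
    t ⊆ s := P.le ht

/-- Add `a` to the part `t` of a finpartition of `s`, giving a finpartition of `insert a s`. -/
def extendPart (ha : a ∉ s) (P : Finpartition s) (t : Finset α) (ht : t ∈ P.parts) :
    Finpartition (insert a s) where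
  parts := insert (insert a t) (P.parts.erase t)
  supIndep := by
    rw [Finset.supIndep_iff_pairwiseDisjoint]
    intro u hu v hv huv
    simp only [coe_insert, Set.mem_insert_iff, mem_coe, mem_erase] at hu hv
    have key : ∀ w ∈ P.parts, w ≠ t → Disjoint (insert a t) w := by
      intro w hw hwt
      rw [Finset.disjoint_left]
      intro x hx hxw
      rcases Finset.mem_insert.1 hx with rfl | hxt
      · exact ha (part_subset P hw hxw)
      · exact (Finset.disjoint_left.1 (P.disjoint ht hw (Ne.symm hwt))) hxt hxw
    rcases hu with rfl | ⟨hut, hu⟩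
    · rcases hv with rfl | ⟨hvt, hv⟩
      · exact absurd rfl huv
      · exact key v hv hvt
    · rcases hv with rfl | ⟨hvt, hv⟩
      · exact (key u hu hut).symm
      · exact P.disjoint hu hv huv
  sup_parts := by
    have h1 : t ⊔ (P.parts.erase t).sup id = s := by
      apply le_antisymm
      · exact sup_le (P.le ht) (Finset.sup_le fun u hu => P.le (Finset.mem_of_mem_erase hu))
      · intro x hx
        obtain ⟨u, hu, hxu⟩ := P.exists_mem hx
        rcases eq_or_ne u t with rfl | hut
        · exact Finset.mem_union_left _ hxu
        · refine Finset.mem_union_right _ ?_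
          exact (Finset.le_sup (f := id) (Finset.mem_erase.2 ⟨hut, hu⟩)) hxu
    rw [Finset.sup_insert, id]
    rw [Finset.sup_eq_union] at h1 ⊢
    rw [Finset.insert_union, h1]
  bot_notMem := by
    simp only [Finset.bot_eq_empty, mem_insert, mem_erase, not_or]
    refine ⟨fun h => ?_, fun h => P.bot_notMem h.2⟩
    exact (Finset.insert_nonempty a t).ne_empty h.symm

lemma mem_extendPart (ha : a ∉ s) (P : Finpartition s) (t : Finset α) (ht : t ∈ P.parts)
    {u : Finset α} :
    u ∈ (extendPart ha P t ht).parts ↔ u = insert a t ∨ (u ≠ t ∧ u ∈ P.parts) := by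
  simp [extendPart, Finset.mem_insert, Finset.mem_erase]

lemma insert_not_mem_parts (ha : a ∉ s) (P : Finpartition s) {t : Finset α} :
    insert a t ∉ P.parts := fun h => ha (part_subset P h (Finset.mem_insert_self a t))

lemma card_extendPart (ha : a ∉ s) (P : Finpartition s) (t : Finset α) (ht : t ∈ P.parts) :
    (extendPart ha P t ht).parts.card = P.parts.card := by
  rw [extendPart]
  have h1 : insert a t ∉ P.parts.erase t :=
    fun h => insert_not_mem_parts ha P (Finset.mem_of_mem_erase h)
  rw [Finset.card_insert_of_notMem h1, Finset.card_erase_of_mem ht]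
  have : 0 < P.parts.card := Finset.card_pos.2 ⟨t, ht⟩
  omega

lemma singleton_not_mem_extendPart (ha : a ∉ s) (P : Finpartition s) (t : Finset α)
    (ht : t ∈ P.parts) : ({a} : Finset α) ∉ (extendPart ha P t ht).parts := by
  rw [mem_extendPart]
  rintro (h | ⟨-, h⟩)
  · obtain ⟨x, hx⟩ := P.nonempty_of_mem_parts ht
    have hxa : x ∈ ({a} : Finset α) := h ▸ Finset.mem_insert_of_mem hx
    rw [Finset.mem_singleton] at hxa
    exact ha (hxa ▸ part_subset P ht hx)
  · exact ha (part_subset P h (Finset.mem_singleton_self a))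

/-- Remove `a` from a finpartition of `insert a s`, giving a finpartition of `s`. -/
def restrictPart (ha : a ∉ s) (Q : Finpartition (insert a s)) : Finpartition s where
  parts := (Q.parts.image (fun u => u.erase a)).erase ∅
  supIndep := by
    rw [Finset.supIndep_iff_pairwiseDisjoint]
    intro u hu v hv huv
    simp only [mem_coe, Finset.mem_erase, Finset.mem_image] at hu hv
    obtain ⟨-, u', hu', rfl⟩ := hu
    obtain ⟨-, v', hv', rfl⟩ := hv
    have : u' ≠ v' := fun h => huv (by rw [h])
    exact Finset.disjoint_of_subset_left (Finset.erase_subset _ _)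
      (Finset.disjoint_of_subset_right (Finset.erase_subset _ _) (Q.disjoint hu' hv' this))
  sup_parts := by
    apply le_antisymm
    · apply Finset.sup_le
      intro u hu
      obtain ⟨-, u', hu', rfl⟩ := by
        simpa only [Finset.mem_erase, Finset.mem_image] using hu
      intro x hx
      have hx' := part_subset Q hu' (Finset.mem_of_mem_erase hx)
      rcases Finset.mem_insert.1 hx' with rfl | h
      · exact absurd rfl (Finset.ne_of_mem_erase hx)
      · exact h
    · intro x hx
      obtain ⟨u, hu, hxu⟩ := Q.exists_mem (Finset.mem_insert_of_mem hx)
      have hxa : x ≠ a := fun h => ha (h ▸ hx)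
      have hmem : x ∈ u.erase a := Finset.mem_erase.2 ⟨hxa, hxu⟩
      have hm : u.erase a ∈ (Q.parts.image (fun u => u.erase a)).erase ∅ :=
        Finset.mem_erase.2 ⟨fun h => by simp [h] at hmem, Finset.mem_image_of_mem _ hu⟩
      exact (Finset.le_sup (f := id) hm : u.erase a ⊆ _) hmem
  bot_notMem := fun h => (Finset.mem_erase.1 h).1 rfl

lemma mem_restrictPart (ha : a ∉ s) (Q : Finpartition (insert a s)) {u : Finset α} :
    u ∈ (restrictPart ha Q).parts ↔ u ≠ ∅ ∧ ∃ v ∈ Q.parts, v.erase a = u := by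
  simp [restrictPart, Finset.mem_erase, Finset.mem_image]

lemma restrictPart_parts_singleton (ha : a ∉ s) (Q : Finpartition (insert a s))
    (h : Q.part a = {a}) : (restrictPart ha Q).parts = Q.parts.erase {a} := by
  have hTmem : ({a} : Finset α) ∈ Q.parts := h ▸ Q.part_mem.2 (Finset.mem_insert_self a s)
  ext u
  rw [mem_restrictPart, Finset.mem_erase]
  constructor
  · rintro ⟨hne, v, hv, rfl⟩
    have hav : a ∉ v := by
      intro hav
      have : v = {a} := h ▸ (Q.part_eq_of_mem hv hav).symm
      simp [this] at hne
    rw [Finset.erase_eq_of_notMem hav]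
    refine ⟨fun hv1 => hav (hv1 ▸ Finset.mem_singleton_self a), hv⟩
  · rintro ⟨hne, hu⟩
    have hau : a ∉ u := by
      intro hau
      exact hne (h ▸ (Q.part_eq_of_mem hu hau).symm)
    exact ⟨Q.nonempty_of_mem_parts hu |>.ne_empty, u, hu,
      Finset.erase_eq_of_notMem hau⟩

lemma restrictPart_parts_of_ne (ha : a ∉ s) (Q : Finpartition (insert a s))
    (h : Q.part a ≠ {a}) :
    (restrictPart ha Q).parts.erase ((Q.part a).erase a) = Q.parts.erase (Q.part a) := by
  have haT : a ∈ Q.part a := Q.mem_part (Finset.mem_insert_self a s)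
  have hTmem : Q.part a ∈ Q.parts := Q.part_mem.2 (Finset.mem_insert_self a s)
  have htne : ((Q.part a).erase a).Nonempty := by
    rw [Finset.erase_nonempty haT]
    rcases Finset.eq_singleton_or_nontrivial haT with h1 | h1
    · exact absurd h1 h
    · exact h1
  ext u
  rw [Finset.mem_erase, mem_restrictPart, Finset.mem_erase]
  constructor
  · rintro ⟨hut, hne, v, hv, rfl⟩
    have hav : a ∉ v := by
      intro hav
      exact hut (by rw [← Q.part_eq_of_mem hv hav])
    rw [Finset.erase_eq_of_notMem hav] at *
    exact ⟨fun hv1 => hav (hv1 ▸ haT), hv⟩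
  · rintro ⟨hne, hu⟩
    have hau : a ∉ u := fun hau => hne (Q.part_eq_of_mem hu hau).symm
    refine ⟨?_, (Q.nonempty_of_mem_parts hu).ne_empty, u, hu, Finset.erase_eq_of_notMem hau⟩
    intro he
    obtain ⟨x, hx⟩ := htne
    have hxu : x ∈ u := he ▸ hx
    have : u = Q.part a := Q.eq_of_mem_parts hu hTmem hxu (Finset.mem_of_mem_erase hx)
    exact hne this

lemma erase_mem_restrictPart (ha : a ∉ s) (Q : Finpartition (insert a s))
    (h : Q.part a ≠ {a}) : (Q.part a).erase a ∈ (restrictPart ha Q).parts := by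
  have haT : a ∈ Q.part a := Q.mem_part (Finset.mem_insert_self a s)
  have hTmem : Q.part a ∈ Q.parts := Q.part_mem.2 (Finset.mem_insert_self a s)
  have htne : ((Q.part a).erase a).Nonempty := by
    rw [Finset.erase_nonempty haT]
    rcases Finset.eq_singleton_or_nontrivial haT with h1 | h1
    · exact absurd h1 h
    · exact h1
  exact (mem_restrictPart ha Q).2 ⟨htne.ne_empty, Q.part a, hTmem, rfl⟩

theorem card_finpartition (s : Finset α) (j : ℕ) :
    Nat.card {P : Finpartition s // P.parts.card = j} = stirling s.card j := by
  induction s using Finset.induction_on generalizing j with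
  | empty =>
    have hparts : ∀ P : Finpartition (∅ : Finset α), P.parts = ∅ := fun P =>
      Finpartition.parts_eq_empty_iff.2 Finset.bot_eq_empty.symm
    cases j with
    | zero =>
      rw [Finset.card_empty]
      haveI : Unique {P : Finpartition (∅ : Finset α) // P.parts.card = 0} :=
        { default := ⟨(Finpartition.empty (Finset α)).copy rfl, by simp [Finpartition.empty]⟩
          uniq := fun P => Subtype.ext (Finpartition.ext (by
            rw [hparts P.1, hparts _]))}
      rw [Nat.card_unique]
      rfl
    | succ j =>
      haveI : IsEmpty {P : Finpartition (∅ : Finset α) // P.parts.card = j + 1} := by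
        refine ⟨fun P => ?_⟩
        have := P.2
        rw [hparts P.1] at this
        simp at this
      rw [Nat.card_of_isEmpty, Finset.card_empty]
      rfl
  | @insert a s ha ih =>
    cases j with
    | zero =>
      haveI : IsEmpty {P : Finpartition (insert a s) // P.parts.card = 0} := by
        refine ⟨fun P => ?_⟩
        have h0 : P.1.parts = ∅ := Finset.card_eq_zero.1 P.2
        have := Finpartition.parts_eq_empty_iff.1 h0
        rw [Finset.bot_eq_empty] at this
        exact (Finset.insert_ne_empty a s) this
      rw [Nat.card_of_isEmpty, Finset.card_insert_of_notMem ha]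
      rfl
    | succ j =>
      have hsub : Disjoint s ({a} : Finset α) := by
        simp [Finset.disjoint_singleton_right, ha]
      have hsup : s ⊔ ({a} : Finset α) = insert a s := by
        rw [Finset.sup_eq_union, Finset.union_comm, ← Finset.insert_eq]
      have hbot : ({a} : Finset α) ≠ ⊥ := by simp
      set G : (Σ P : {P : Finpartition s // P.parts.card = j + 1}, {t // t ∈ P.1.parts}) ⊕
          {P : Finpartition s // P.parts.card = j} →
          {Q : Finpartition (insert a s) // Q.parts.card = j + 1} :=
        Sum.elim
          (fun x => ⟨extendPart ha x.1.1 x.2.1 x.2.2, by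
            rw [card_extendPart]; exact x.1.2⟩)
          (fun P => ⟨P.1.extend hbot hsub hsup, by
            rw [Finpartition.card_extend, P.2]⟩) with hG
      have hsna : ∀ (P : Finpartition s), ({a} : Finset α) ∉ P.parts := fun P h =>
        ha (part_subset P h (Finset.mem_singleton_self a))
      have hGbij : Function.Bijective G := by
        constructor
        · rintro (⟨⟨P, hP⟩, ⟨t, ht⟩⟩ | ⟨P, hP⟩) (⟨⟨P', hP'⟩, ⟨t', ht'⟩⟩ | ⟨P', hP'⟩) h <;>
            have hparts := congrArg (fun Q => Subtype.val Q |>.parts) h <;>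
            simp only [hG, Sum.elim_inl, Sum.elim_inr, extendPart,
              Finpartition.extend_parts] at hparts
          -- inl inl
          · have hat : a ∉ t := fun h => ha (part_subset P ht h)
            have hat' : a ∉ t' := fun h => ha (part_subset P' ht' h)
            have h1 : insert a t = insert a t' := by
              have hm : insert a t ∈ insert (insert a t') (P'.parts.erase t') := by
                rw [← hparts]; exact Finset.mem_insert_self _ _
              rcases Finset.mem_insert.1 hm with h1 | h1
              · exact h1
              · exact absurd (Finset.mem_of_mem_erase h1) (insert_not_mem_parts ha P')
            have ht2 : t = t' := by
              rw [← Finset.erase_insert hat, ← Finset.erase_insert hat', h1]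
            subst ht2
            have h2 : P.parts.erase t = P'.parts.erase t := by
              have hni : insert a t ∉ P.parts.erase t := fun h =>
                insert_not_mem_parts ha P (Finset.mem_of_mem_erase h)
              have hni' : insert a t ∉ P'.parts.erase t := fun h =>
                insert_not_mem_parts ha P' (Finset.mem_of_mem_erase h)
              rw [← Finset.erase_insert hni, ← Finset.erase_insert hni', ← h1, hparts, h1]
            have hPP : P = P' := Finpartition.ext (by
              rw [← Finset.insert_erase ht, ← Finset.insert_erase ht', h2])
            subst hPP
            rfl
          -- inl inr
          · exfalso
            have hm : ({a} : Finset α) ∈ insert (insert a t) (P.parts.erase t) := by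
              rw [hparts]; exact Finset.mem_insert_self _ _
            exact singleton_not_mem_extendPart ha P t ht hm
          -- inr inl
          · exfalso
            have hm : ({a} : Finset α) ∈ insert (insert a t') (P'.parts.erase t') := by
              rw [← hparts]; exact Finset.mem_insert_self _ _
            exact singleton_not_mem_extendPart ha P' t' ht' hm
          -- inr inr
          · have h2 : P.parts = P'.parts := by
              rw [← Finset.erase_insert (hsna P), ← Finset.erase_insert (hsna P'), hparts]
            have hPP : P = P' := Finpartition.ext h2
            subst hPP
            rfl
        · rintro ⟨Q, hQ⟩
          have haT : a ∈ Q.part a := Q.mem_part (Finset.mem_insert_self a s)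
          have hTmem : Q.part a ∈ Q.parts := Q.part_mem.2 (Finset.mem_insert_self a s)
          by_cases hT : Q.part a = {a}
          · have hmem : ({a} : Finset α) ∈ Q.parts := hT ▸ hTmem
            refine ⟨Sum.inr ⟨restrictPart ha Q, ?_⟩, ?_⟩
            · rw [restrictPart_parts_singleton ha Q hT, Finset.card_erase_of_mem hmem, hQ]
              omega
            · apply Subtype.ext
              apply Finpartition.ext
              simp only [hG, Sum.elim_inr, Finpartition.extend_parts]
              rw [restrictPart_parts_singleton ha Q hT, Finset.insert_erase hmem]
          · have htm := erase_mem_restrictPart ha Q hT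
            have hcardr : (restrictPart ha Q).parts.card = j + 1 := by
              have h1 := Finset.card_erase_of_mem htm
              rw [restrictPart_parts_of_ne ha Q hT, Finset.card_erase_of_mem hTmem, hQ] at h1
              have h2 : 0 < (restrictPart ha Q).parts.card := Finset.card_pos.2 ⟨_, htm⟩
              omega
            refine ⟨Sum.inl ⟨⟨restrictPart ha Q, hcardr⟩, ⟨(Q.part a).erase a, htm⟩⟩, ?_⟩
            apply Subtype.ext
            apply Finpartition.ext
            simp only [hG, Sum.elim_inl, extendPart]
            rw [restrictPart_parts_of_ne ha Q hT, Finset.insert_erase haT,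
              Finset.insert_erase hTmem]
      have key := Nat.card_eq_of_bijective G hGbij
      rw [Nat.card_eq_fintype_card, Fintype.card_sum, Fintype.card_sigma] at key
      simp only [Fintype.card_coe] at key
      have hsum : ∀ P : {P : Finpartition s // P.parts.card = j + 1}, P.1.parts.card = j + 1 :=
        fun P => P.2
      rw [Finset.sum_congr rfl (fun P _ => hsum P), Finset.sum_const, smul_eq_mul,
        Finset.card_univ] at key
      rw [Finset.card_insert_of_notMem ha, ← key,
        ← Nat.card_eq_fintype_card, ← Nat.card_eq_fintype_card, ih (j+1), ih j]
      have hst : stirling (s.card + 1) (j + 1) =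
          (j + 1) * stirling s.card (j + 1) + stirling s.card j := rfl
      rw [hst, Nat.mul_comm]

section Connecting

variable {β : Type*} [DecidableEq β] [Fintype β] {A B : Finset β}

/-- Glue a partition of `A` and a partition of `B` along a bijection of their parts. -/
def unionParts (hAB : Disjoint A B) (hABu : A ∪ B = Finset.univ)
    (P₁ : Finpartition A) (P₂ : Finpartition B)
    (e : {t // t ∈ P₁.parts} ≃ {t // t ∈ P₂.parts}) :
    Finpartition (Finset.univ : Finset β) where
  parts := P₁.parts.attach.image (fun t => t.1 ∪ (e t).1)
  supIndep := by
    rw [Finset.supIndep_iff_pairwiseDisjoint]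
    intro u hu v hv huv
    simp only [coe_image, Set.mem_image, mem_coe, Finset.mem_attach, true_and,
      Set.mem_setOf_eq] at hu hv
    obtain ⟨t, -, rfl⟩ := hu
    obtain ⟨t', -, rfl⟩ := hv
    have htt : t ≠ t' := fun h => huv (by rw [h])
    have h1 : Disjoint t.1 t'.1 :=
      P₁.disjoint t.2 t'.2 (fun h => htt (Subtype.ext h))
    have hee : e t ≠ e t' := fun h => htt (e.injective h)
    have h2 : Disjoint (e t).1 (e t').1 :=
      P₂.disjoint (e t).2 (e t').2 (fun h => hee (Subtype.ext h))
    have h3 : Disjoint t.1 (e t').1 :=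
      hAB.mono (P₁.le t.2) (P₂.le (e t').2)
    have h4 : Disjoint (e t).1 t'.1 :=
      (hAB.mono (P₁.le t'.2) (P₂.le (e t).2)).symm
    show Disjoint (t.1 ∪ (e t).1) (t'.1 ∪ (e t').1)
    rw [Finset.disjoint_union_left, Finset.disjoint_union_right,
      Finset.disjoint_union_right]
    exact ⟨⟨h1, h3⟩, ⟨h4, h2⟩⟩
  sup_parts := by
    apply le_antisymm
    · exact le_top
    · intro x _
      have hx : x ∈ A ∪ B := hABu ▸ Finset.mem_univ x
      rcases Finset.mem_union.1 hx with h | h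
      · obtain ⟨t, ht, hxt⟩ := P₁.exists_mem h
        have : t ∪ (e ⟨t, ht⟩).1 ∈ P₁.parts.attach.image (fun t => t.1 ∪ (e t).1) :=
          Finset.mem_image.2 ⟨⟨t, ht⟩, Finset.mem_attach _ _, rfl⟩
        exact (Finset.le_sup (f := id) this : t ∪ (e ⟨t, ht⟩).1 ⊆ _) (Finset.mem_union_left _ hxt)
      · obtain ⟨u, hu, hxu⟩ := P₂.exists_mem h
        set t := e.symm ⟨u, hu⟩
        have heq : (e t).1 = u := by rw [Equiv.apply_symm_apply]
        have : t.1 ∪ (e t).1 ∈ P₁.parts.attach.image (fun t => t.1 ∪ (e t).1) :=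
          Finset.mem_image.2 ⟨t, Finset.mem_attach _ _, rfl⟩
        refine (Finset.le_sup (f := id) this : t.1 ∪ (e t).1 ⊆ _) (Finset.mem_union_right _ ?_)
        rw [heq]; exact hxu
  bot_notMem := by
    simp only [Finset.bot_eq_empty, Finset.mem_image]
    rintro ⟨t, -, h⟩
    obtain ⟨x, hx⟩ := P₁.nonempty_of_mem_parts t.2
    have : x ∈ (∅ : Finset β) := h ▸ Finset.mem_union_left _ hx
    exact absurd this (Finset.notMem_empty x)

lemma mem_unionParts (hAB : Disjoint A B) (hABu : A ∪ B = Finset.univ)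
    {P₁ : Finpartition A} {P₂ : Finpartition B}
    {e : {t // t ∈ P₁.parts} ≃ {t // t ∈ P₂.parts}} {u : Finset β} :
    u ∈ (unionParts hAB hABu P₁ P₂ e).parts ↔
      ∃ (t : Finset β) (ht : t ∈ P₁.parts), u = t ∪ (e ⟨t, ht⟩).1 := by
  simp only [unionParts, Finset.mem_image, Finset.mem_attach, true_and]
  constructor
  · rintro ⟨⟨t, ht⟩, rfl⟩; exact ⟨t, ht, rfl⟩
  · rintro ⟨t, ht, rfl⟩; exact ⟨⟨t, ht⟩, rfl⟩

lemma union_inter_A (hAB : Disjoint A B) {P₁ : Finpartition A} {P₂ : Finpartition B}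
    {t u : Finset β} (ht : t ∈ P₁.parts) (hu : u ∈ P₂.parts) : (t ∪ u) ∩ A = t := by
  rw [Finset.union_inter_distrib_right, Finset.inter_eq_left.2 (P₁.le ht),
    Finset.disjoint_iff_inter_eq_empty.1 (hAB.symm.mono_left (P₂.le hu)),
    Finset.union_empty]

lemma union_inter_B (hAB : Disjoint A B) {P₁ : Finpartition A} {P₂ : Finpartition B}
    {t u : Finset β} (ht : t ∈ P₁.parts) (hu : u ∈ P₂.parts) : (t ∪ u) ∩ B = u := by
  rw [Finset.union_inter_distrib_right, Finset.inter_eq_left.2 (P₂.le hu),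
    Finset.disjoint_iff_inter_eq_empty.1 (hAB.mono_left (P₁.le ht)),
    Finset.empty_union]

/-- Restrict a partition of `univ` all of whose parts meet `A` to a partition of `A`. -/
def restrictTo (A : Finset β) (Q : Finpartition (Finset.univ : Finset β))
    (h : ∀ X ∈ Q.parts, (X ∩ A).Nonempty) : Finpartition A where
  parts := Q.parts.image (· ∩ A)
  supIndep := by
    rw [Finset.supIndep_iff_pairwiseDisjoint]
    intro u hu v hv huv
    simp only [coe_image, Set.mem_image, mem_coe] at hu hv
    obtain ⟨u', hu', rfl⟩ := hu
    obtain ⟨v', hv', rfl⟩ := hv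
    have : u' ≠ v' := fun h => huv (by rw [h])
    exact Finset.disjoint_of_subset_left (Finset.inter_subset_left)
      (Finset.disjoint_of_subset_right (Finset.inter_subset_left) (Q.disjoint hu' hv' this))
  sup_parts := by
    apply le_antisymm
    · exact Finset.sup_le fun u hu => by
        obtain ⟨u', -, rfl⟩ := Finset.mem_image.1 hu
        exact Finset.inter_subset_right
    · intro x hx
      obtain ⟨u, hu, hxu⟩ := Q.exists_mem (Finset.mem_univ x)
      have hm : u ∩ A ∈ Q.parts.image (· ∩ A) := Finset.mem_image_of_mem (· ∩ A) hu
      exact (Finset.le_sup (f := id) hm : u ∩ A ⊆ _) (Finset.mem_inter.2 ⟨hxu, hx⟩)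
  bot_notMem := by
    simp only [Finset.bot_eq_empty, Finset.mem_image]
    rintro ⟨u, hu, hemp⟩
    exact (h u hu).ne_empty hemp

end Connecting

section Connecting2

variable {β : Type*} [DecidableEq β] [Fintype β] {A B : Finset β}

lemma unionParts_image_A (hAB : Disjoint A B) (hABu : A ∪ B = Finset.univ)
    (P₁ : Finpartition A) (P₂ : Finpartition B)
    (e : {t // t ∈ P₁.parts} ≃ {t // t ∈ P₂.parts}) :
    (unionParts hAB hABu P₁ P₂ e).parts.image (· ∩ A) = P₁.parts := by
  ext u
  simp only [Finset.mem_image]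
  constructor
  · rintro ⟨X, hX, rfl⟩
    obtain ⟨t, ht, rfl⟩ := (mem_unionParts hAB hABu).1 hX
    rw [union_inter_A hAB ht (e ⟨t, ht⟩).2]
    exact ht
  · intro hu
    exact ⟨u ∪ (e ⟨u, hu⟩).1, (mem_unionParts hAB hABu).2 ⟨u, hu, rfl⟩,
      union_inter_A hAB hu (e ⟨u, hu⟩).2⟩

lemma unionParts_image_B (hAB : Disjoint A B) (hABu : A ∪ B = Finset.univ)
    (P₁ : Finpartition A) (P₂ : Finpartition B)
    (e : {t // t ∈ P₁.parts} ≃ {t // t ∈ P₂.parts}) :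
    (unionParts hAB hABu P₁ P₂ e).parts.image (· ∩ B) = P₂.parts := by
  ext u
  simp only [Finset.mem_image]
  constructor
  · rintro ⟨X, hX, rfl⟩
    obtain ⟨t, ht, rfl⟩ := (mem_unionParts hAB hABu).1 hX
    rw [union_inter_B hAB ht (e ⟨t, ht⟩).2]
    exact (e ⟨t, ht⟩).2
  · intro hu
    set t := e.symm ⟨u, hu⟩
    have heq : (e t).1 = u := by rw [Equiv.apply_symm_apply]
    refine ⟨t.1 ∪ (e t).1, (mem_unionParts hAB hABu).2 ⟨t.1, t.2, by simp⟩, ?_⟩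
    rw [union_inter_B hAB t.2 (e t).2, heq]

lemma card_equiv_ite (γ δ : Type*) [Fintype γ] [Fintype δ] [DecidableEq γ] [DecidableEq δ] :
    Fintype.card (γ ≃ δ) = if Fintype.card γ = Fintype.card δ then (Fintype.card γ)! else 0 := by
  split_ifs with h
  · exact Fintype.card_equiv (Fintype.equivOfCardEq h)
  · haveI : IsEmpty (γ ≃ δ) := ⟨fun e => h (Fintype.card_congr e)⟩
    exact Fintype.card_eq_zero

lemma sum_fiber {γ : Type*} [Fintype γ] (f : γ → ℕ) (M : ℕ → ℕ) (N : ℕ)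
    (hf : ∀ x, f x < N) :
    ∑ x : γ, M (f x) =
      ∑ j ∈ Finset.range N, (Finset.univ.filter (fun x => f x = j)).card * M j := by
  rw [← Finset.sum_fiberwise_of_maps_to (fun x _ => Finset.mem_range.2 (hf x))
    (fun x => M (f x))]
  refine Finset.sum_congr rfl fun j hj => ?_
  rw [Finset.sum_congr rfl (fun x hx => by rw [(Finset.mem_filter.1 hx).2]),
    Finset.sum_const, smul_eq_mul]

theorem card_connecting (hAB : Disjoint A B) (hABu : A ∪ B = Finset.univ) :
    Nat.card {P : Finpartition (Finset.univ : Finset β) //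
        ∀ X ∈ P.parts, (X ∩ A).Nonempty ∧ (X ∩ B).Nonempty} =
      ∑ j ∈ Finset.range (Fintype.card β + 1),
        j ! * stirling A.card j * stirling B.card j := by
  set H : (Σ P₁ : Finpartition A, Σ P₂ : Finpartition B,
      ({t // t ∈ P₁.parts} ≃ {t // t ∈ P₂.parts})) → {P : Finpartition (Finset.univ : Finset β) //
      ∀ X ∈ P.parts, (X ∩ A).Nonempty ∧ (X ∩ B).Nonempty} :=
    fun x => ⟨unionParts hAB hABu x.1 x.2.1 x.2.2, by
      intro X hX
      obtain ⟨t, ht, rfl⟩ := (mem_unionParts hAB hABu).1 hX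
      constructor
      · rw [union_inter_A hAB ht (x.2.2 ⟨t, ht⟩).2]
        exact x.1.nonempty_of_mem_parts ht
      · rw [union_inter_B hAB ht (x.2.2 ⟨t, ht⟩).2]
        exact x.2.1.nonempty_of_mem_parts (x.2.2 ⟨t, ht⟩).2⟩ with hH
  have hHbij : Function.Bijective H := by
    constructor
    · rintro ⟨P₁, P₂, e⟩ ⟨P₁', P₂', e'⟩ h
      have hparts : (unionParts hAB hABu P₁ P₂ e).parts =
          (unionParts hAB hABu P₁' P₂' e').parts := congrArg (fun Q => Subtype.val Q |>.parts) h
      have hP1 : P₁ = P₁' := Finpartition.ext (by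
        rw [← unionParts_image_A hAB hABu P₁ P₂ e, ← unionParts_image_A hAB hABu P₁' P₂' e',
          hparts])
      subst hP1
      have hP2 : P₂ = P₂' := Finpartition.ext (by
        rw [← unionParts_image_B hAB hABu P₁ P₂ e, ← unionParts_image_B hAB hABu P₁ P₂' e',
          hparts])
      subst hP2
      have he : e = e' := by
        apply Equiv.ext
        rintro ⟨t, ht⟩
        obtain ⟨x, hx⟩ := P₁.nonempty_of_mem_parts ht
        have h1 : t ∪ (e ⟨t, ht⟩).1 ∈ (unionParts hAB hABu P₁ P₂ e).parts :=
          (mem_unionParts hAB hABu).2 ⟨t, ht, rfl⟩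
        have h2 : t ∪ (e' ⟨t, ht⟩).1 ∈ (unionParts hAB hABu P₁ P₂ e).parts := by
          rw [hparts]
          exact (mem_unionParts hAB hABu).2 ⟨t, ht, rfl⟩
        have h3 := (unionParts hAB hABu P₁ P₂ e).eq_of_mem_parts h1 h2
          (Finset.mem_union_left _ hx) (Finset.mem_union_left _ hx)
        apply Subtype.ext
        have := congrArg (· ∩ B) h3
        simpa only [union_inter_B hAB ht (e ⟨t, ht⟩).2,
          union_inter_B hAB ht (e' ⟨t, ht⟩).2] using this
      rw [he]
    · rintro ⟨Q, hQ⟩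
      have hA : ∀ X ∈ Q.parts, (X ∩ A).Nonempty := fun X hX => (hQ X hX).1
      have hB : ∀ X ∈ Q.parts, (X ∩ B).Nonempty := fun X hX => (hQ X hX).2
      set P₁ := restrictTo A Q hA with hP₁
      set P₂ := restrictTo B Q hB with hP₂
      have hmem₁ : ∀ {t : Finset β}, t ∈ P₁.parts ↔ ∃ u ∈ Q.parts, u ∩ A = t := by
        intro t; rw [hP₁]; exact Finset.mem_image
      have hmem₂ : ∀ {t : Finset β}, t ∈ P₂.parts ↔ ∃ u ∈ Q.parts, u ∩ B = t := by
        intro t; rw [hP₂]; exact Finset.mem_image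
      have hkey : ∀ (t : Finset β), t ∈ P₁.parts → ∀ x ∈ t, Q.part x ∩ A = t := by
        intro t ht x hx
        obtain ⟨u, hu, hut⟩ := hmem₁.1 ht
        have hxu : x ∈ u := Finset.mem_of_mem_inter_left (hut ▸ hx)
        rw [Q.part_eq_of_mem hu hxu, hut]
      have hch : ∀ (t : {t // t ∈ P₁.parts}), (P₁.nonempty_of_mem_parts t.2).choose ∈ t.1 :=
        fun t => (P₁.nonempty_of_mem_parts t.2).choose_spec
      set e₀ : {t // t ∈ P₁.parts} → {w // w ∈ P₂.parts} :=
        fun t => ⟨Q.part ((P₁.nonempty_of_mem_parts t.2).choose) ∩ B,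
          hmem₂.2 ⟨_, Q.part_mem.2 (Finset.mem_univ _), rfl⟩⟩ with he₀
      have he₀val : ∀ (t : {t // t ∈ P₁.parts}) (x : β), x ∈ t.1 →
          (e₀ t).1 = Q.part x ∩ B := by
        rintro ⟨t, ht⟩ x hx
        set x₀ := (P₁.nonempty_of_mem_parts ht).choose with hx₀
        have hx₀t : x₀ ∈ t := hch ⟨t, ht⟩
        have h1 : Q.part x₀ ∩ A = t := hkey t ht x₀ hx₀t
        have h2 : Q.part x ∩ A = t := hkey t ht x hx
        have hxp' : x ∈ Q.part x₀ ∩ A := by rw [h1]; exact hx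
        have hxp : x ∈ Q.part x₀ := Finset.mem_of_mem_inter_left hxp'
        have : Q.part x = Q.part x₀ := Q.eq_of_mem_parts (Q.part_mem.2 (Finset.mem_univ x))
          (Q.part_mem.2 (Finset.mem_univ x₀)) (Q.mem_part (Finset.mem_univ x)) hxp
        rw [he₀]
        simp only [← hx₀, this]
      have he₀bij : Function.Bijective e₀ := by
        constructor
        · rintro ⟨t, ht⟩ ⟨t', ht'⟩ h
          obtain ⟨x, hx⟩ := P₁.nonempty_of_mem_parts ht
          obtain ⟨x', hx'⟩ := P₁.nonempty_of_mem_parts ht'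
          have hv : Q.part x ∩ B = Q.part x' ∩ B := by
            rw [← he₀val ⟨t, ht⟩ x hx, ← he₀val ⟨t', ht'⟩ x' hx', h]
          obtain ⟨y, hy⟩ := hB _ (Q.part_mem.2 (Finset.mem_univ x))
          have hy' : y ∈ Q.part x' ∩ B := hv ▸ hy
          have hpp : Q.part x = Q.part x' := Q.eq_of_mem_parts
            (Q.part_mem.2 (Finset.mem_univ x)) (Q.part_mem.2 (Finset.mem_univ x'))
            (Finset.mem_of_mem_inter_left hy) (Finset.mem_of_mem_inter_left hy')
          apply Subtype.ext
          show t = t'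
          rw [← hkey t ht x hx, ← hkey t' ht' x' hx', hpp]
        · rintro ⟨w, hw⟩
          obtain ⟨u, hu, huw⟩ := hmem₂.1 hw
          have ht : u ∩ A ∈ P₁.parts := hmem₁.2 ⟨u, hu, rfl⟩
          refine ⟨⟨u ∩ A, ht⟩, ?_⟩
          obtain ⟨x, hx⟩ := hA u hu
          apply Subtype.ext
          rw [he₀val ⟨u ∩ A, ht⟩ x hx,
            Q.part_eq_of_mem hu (Finset.mem_of_mem_inter_left hx), huw]
      refine ⟨⟨P₁, P₂, Equiv.ofBijective e₀ he₀bij⟩, ?_⟩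
      apply Subtype.ext
      apply Finpartition.ext
      ext X
      rw [hH]
      simp only []
      rw [mem_unionParts hAB hABu]
      constructor
      · rintro ⟨t, ht, rfl⟩
        obtain ⟨x, hx⟩ := P₁.nonempty_of_mem_parts ht
        have h1 : (Equiv.ofBijective e₀ he₀bij ⟨t, ht⟩).1 = Q.part x ∩ B :=
          he₀val ⟨t, ht⟩ x hx
        rw [h1, ← hkey t ht x hx, ← Finset.inter_union_distrib_left, hABu,
          Finset.inter_univ]
        exact Q.part_mem.2 (Finset.mem_univ x)
      · intro hX
        have ht : X ∩ A ∈ P₁.parts := hmem₁.2 ⟨X, hX, rfl⟩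
        obtain ⟨x, hx⟩ := hA X hX
        refine ⟨X ∩ A, ht, ?_⟩
        have h1 : (Equiv.ofBijective e₀ he₀bij ⟨X ∩ A, ht⟩).1 = Q.part x ∩ B :=
          he₀val ⟨X ∩ A, ht⟩ x hx
        rw [h1, Q.part_eq_of_mem hX (Finset.mem_of_mem_inter_left hx),
          ← Finset.inter_union_distrib_left, hABu, Finset.inter_univ]
  have key := (Nat.card_eq_of_bijective H hHbij).symm
  rw [key, Nat.card_eq_fintype_card, Fintype.card_sigma]
  have hstep : ∀ P₁ : Finpartition A,
      Fintype.card (Σ P₂ : Finpartition B, ({t // t ∈ P₁.parts} ≃ {t // t ∈ P₂.parts})) =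
        stirling B.card P₁.parts.card * (P₁.parts.card)! := by
    intro P₁
    rw [Fintype.card_sigma]
    have : ∀ P₂ : Finpartition B,
        Fintype.card ({t // t ∈ P₁.parts} ≃ {t // t ∈ P₂.parts}) =
          if P₂.parts.card = P₁.parts.card then (P₁.parts.card)! else 0 := by
      intro P₂
      rw [card_equiv_ite, Fintype.card_coe, Fintype.card_coe]
      by_cases h : P₁.parts.card = P₂.parts.card
      · simp [h]
      · simp [h, Ne.symm h]
    rw [Finset.sum_congr rfl (fun P₂ _ => this P₂), ← Finset.sum_filter,
      Finset.sum_const, smul_eq_mul]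
    congr 1
    have := card_finpartition (α := β) B P₁.parts.card
    rw [Nat.card_eq_fintype_card, Fintype.card_subtype] at this
    exact this
  rw [Finset.sum_congr rfl (fun P₁ _ => hstep P₁)]
  have hbound : ∀ P₁ : Finpartition A, P₁.parts.card < Fintype.card β + 1 := by
    intro P₁
    have h1 := P₁.card_parts_le_card
    have h2 := Finset.card_le_univ A
    omega
  rw [sum_fiber (fun P₁ : Finpartition A => P₁.parts.card)
    (fun m => stirling B.card m * m !) _ hbound]
  refine Finset.sum_congr rfl fun j hj => ?_
  have := card_finpartition (α := β) A j
  rw [Nat.card_eq_fintype_card, Fintype.card_subtype] at this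
  rw [this]
  ring

end Connecting2

/-- A `(k₁,k₂)`-connecting set partition of `{1,…,k₁+k₂}` (here 0-indexed as `Fin (k₁+k₂)`):
every block has minimum among the first `k₁` elements and maximum among the last `k₂`. -/
theorem stmt7 (k₁ k₂ : ℕ) (h₁ : 1 ≤ k₁) (h₂ : 1 ≤ k₂) :
    Nat.card {P : Finpartition (Finset.univ : Finset (Fin (k₁ + k₂))) //
      ∀ X ∈ P.parts, ∀ h : X.Nonempty,
        ((X.min' h : ℕ) < k₁ ∧ k₁ ≤ (X.max' h : ℕ))} =
    ∑ j ∈ Finset.range (k₁ + k₂ + 1), j ! * stirling k₁ j * stirling k₂ j := by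
  set A : Finset (Fin (k₁ + k₂)) := Finset.univ.filter (fun i => (i : ℕ) < k₁) with hA
  set B : Finset (Fin (k₁ + k₂)) := Finset.univ.filter (fun i => ¬ (i : ℕ) < k₁) with hB
  have hAB : Disjoint A B := Finset.disjoint_filter_filter_not _ _ _
  have hABu : A ∪ B = Finset.univ := Finset.filter_union_filter_not_eq _ _
  have hcardA : A.card = k₁ := by
    have hlt : k₁ < k₁ + k₂ := by omega
    have : A = Finset.Iio (⟨k₁, hlt⟩ : Fin (k₁ + k₂)) := by
      ext i
      simp [hA, Finset.mem_Iio, Fin.lt_def]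
    rw [this, Fin.card_Iio]
  have hcardB : B.card = k₂ := by
    have := Finset.card_filter_add_card_filter_not
      (s := (Finset.univ : Finset (Fin (k₁ + k₂)))) (p := fun i => (i : ℕ) < k₁)
    rw [← hA, ← hB] at this
    rw [Finset.card_univ, Fintype.card_fin] at this
    omega
  have hiff : ∀ P : Finpartition (Finset.univ : Finset (Fin (k₁ + k₂))),
      (∀ X ∈ P.parts, ∀ h : X.Nonempty, ((X.min' h : ℕ) < k₁ ∧ k₁ ≤ (X.max' h : ℕ))) ↔
      (∀ X ∈ P.parts, (X ∩ A).Nonempty ∧ (X ∩ B).Nonempty) := by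
    intro P
    constructor
    · intro h X hX
      have hne := P.nonempty_of_mem_parts hX
      obtain ⟨hmin, hmax⟩ := h X hX hne
      constructor
      · exact ⟨X.min' hne, Finset.mem_inter.2 ⟨X.min'_mem hne,
          Finset.mem_filter.2 ⟨Finset.mem_univ _, hmin⟩⟩⟩
      · exact ⟨X.max' hne, Finset.mem_inter.2 ⟨X.max'_mem hne,
          Finset.mem_filter.2 ⟨Finset.mem_univ _, by omega⟩⟩⟩
    · intro h X hX hne
      obtain ⟨⟨x, hx⟩, ⟨y, hy⟩⟩ := h X hX
      obtain ⟨hxX, hxA⟩ := Finset.mem_inter.1 hx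
      obtain ⟨hyX, hyB⟩ := Finset.mem_inter.1 hy
      have hxk : (x : ℕ) < k₁ := (Finset.mem_filter.1 hxA).2
      have hyk : ¬ (y : ℕ) < k₁ := (Finset.mem_filter.1 hyB).2
      have hm1 : X.min' hne ≤ x := X.min'_le x hxX
      have hm2 : y ≤ X.max' hne := X.le_max' y hyX
      rw [Fin.le_def] at hm1 hm2
      omega
  rw [Nat.card_congr (Equiv.subtypeEquivRight hiff), card_connecting hAB hABu,
    Fintype.card_fin, hcardA, hcardB]
end
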